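/- arXiv:1802.10531 — 11 statements merged into one kernel-verified Lean document; each statement's English description precedes it below -/
import Mathlib

section
/- Let F be a field and n ≥ 1. For every matrix A ∈ GL(n,F) there exist a permutation π of {1,…,n}, an invertible diagonal matrix D over F, and an upper triangular matrix U over F with all diagonal entries equal to 1, such that the product D·A·U is π-shaped, i.e. its (π(j),j)-entry equals 1 for every j, and its (i,j)-entry equals 0 whenever i > π(j) or j > π⁻¹(i). -/
/-!
Induction on `n`, clearing the first column. Let `r` be the lowest row with `A r 0 ≠ 0`.
Scaling row `r` makes that entry `1`, and subtracting multiples of column `0` from the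
other columns (an upper unitriangular operation) makes row `r` equal to `e₀`; the entries of
column `0` below row `r` stay zero. Expanding the determinant along row `r` shows that the
minor obtained by deleting row `r` and column `0` is invertible, so by induction it can be
brought into `σ`-shape. Performing these operations on the whole matrix does not disturb row `r`
or the zeros in column `0`, and the result is shaped by the permutation sending `0 ↦ r` and
`j + 1 ↦ r.succAbove (σ j)`.
-/

open Equiv

namespace Equiv.Perm

variable {n : ℕ}

def succAboveCons (r : Fin (n + 1)) (σ : Perm (Fin n)) : Perm (Fin (n + 1)) :=
  ((finSuccEquiv n).trans σ.optionCongr).trans (finSuccEquiv' r).symm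

variable (r : Fin (n + 1)) (σ : Perm (Fin n))

@[simp] theorem succAboveCons_zero : succAboveCons r σ 0 = r := by
  simp [succAboveCons]

@[simp] theorem succAboveCons_succ (j : Fin n) :
    succAboveCons r σ j.succ = r.succAbove (σ j) := by
  simp [succAboveCons]

@[simp] theorem succAboveCons_symm_self : (succAboveCons r σ).symm r = 0 := by
  rw [symm_apply_eq, succAboveCons_zero]

@[simp] theorem succAboveCons_symm_succAbove (i : Fin n) :
    (succAboveCons r σ).symm (r.succAbove i) = (σ.symm i).succ := by
  rw [symm_apply_eq, succAboveCons_succ, apply_symm_apply]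

end Equiv.Perm

namespace Matrix

variable {m R : Type*}

def IsUpperUnitriangular [LT m] [Zero R] [One R] (U : Matrix m m R) : Prop :=
  U.IsUpperTriangular ∧ ∀ i, U i i = 1

def IsPermShaped [LinearOrder m] [Zero R] [One R] (π : Perm m) (S : Matrix m m R) : Prop :=
  (∀ j, S (π j) j = 1) ∧ ∀ i j, (π j < i ∨ π.symm i < j) → S i j = 0

theorem IsUpperUnitriangular.one [LinearOrder m] [Semiring R] :
    (1 : Matrix m m R).IsUpperUnitriangular :=
  ⟨blockTriangular_one, fun _ => one_apply_eq _⟩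

section Unitriangular

variable [Fintype m] [LinearOrder m]

theorem IsUpperTriangular.mul_apply_self [Semiring R] {U V : Matrix m m R}
    (hU : U.IsUpperTriangular) (hV : V.IsUpperTriangular) (i : m) :
    (U * V) i i = U i i * V i i := by
  rw [mul_apply, Finset.sum_eq_single i]
  · intro k _ hki
    rcases hki.lt_or_gt with hki | hik
    · rw [hU hki, zero_mul]
    · rw [hV hik, mul_zero]
  · simp

theorem IsUpperUnitriangular.mul [Semiring R] {U V : Matrix m m R}
    (hU : U.IsUpperUnitriangular) (hV : V.IsUpperUnitriangular) :
    (U * V).IsUpperUnitriangular :=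
  ⟨hU.1.mul hV.1, fun i => by rw [hU.1.mul_apply_self hV.1, hU.2, hV.2, one_mul]⟩

theorem IsUpperUnitriangular.isUnit [CommRing R] {U : Matrix m m R}
    (hU : U.IsUpperUnitriangular) : IsUnit U := by
  rw [isUnit_iff_isUnit_det, det_of_isUpperTriangular hU.1]
  simp [hU.2]

end Unitriangular

section Reduces

variable [Fintype m] [LinearOrder m]

def DiagUnitriangularReduces [Semiring R] (A S : Matrix m m R) : Prop :=
  ∃ (d : m → R) (U : Matrix m m R),
    (∀ i, IsUnit (d i)) ∧ U.IsUpperUnitriangular ∧ diagonal d * A * U = S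

namespace DiagUnitriangularReduces

theorem refl [Semiring R] (A : Matrix m m R) : DiagUnitriangularReduces A A :=
  ⟨1, 1, fun _ => isUnit_one, .one, by simp⟩

theorem trans [Semiring R] {A B C : Matrix m m R} (hAB : DiagUnitriangularReduces A B)
    (hBC : DiagUnitriangularReduces B C) : DiagUnitriangularReduces A C := by
  obtain ⟨d₁, U₁, hd₁, hU₁, rfl⟩ := hAB
  obtain ⟨d₂, U₂, hd₂, hU₂, rfl⟩ := hBC
  refine ⟨fun i => d₂ i * d₁ i, U₁ * U₂, fun i => (hd₂ i).mul (hd₁ i),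
    hU₁.mul hU₂, ?_⟩
  simp only [← diagonal_mul_diagonal, Matrix.mul_assoc]

theorem isUnit [CommRing R] {A S : Matrix m m R} (h : DiagUnitriangularReduces A S)
    (hA : IsUnit A) : IsUnit S := by
  obtain ⟨d, U, hd, hU, rfl⟩ := h
  exact ((isUnit_diagonal.2 (Pi.isUnit_iff.2 hd)).mul hA).mul hU.isUnit

end DiagUnitriangularReduces

end Reduces

theorem exists_lowest_ne_zero_of_isUnit [Fintype m] [LinearOrder m] [CommRing R] [Nontrivial R]
    {A : Matrix m m R} (hA : IsUnit A) (j : m) :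
    ∃ r, A r j ≠ 0 ∧ ∀ i, r < i → A i j = 0 := by
  classical
  obtain ⟨i₀, hi₀⟩ : ∃ i, A i j ≠ 0 := by
    by_contra! h
    have hdet := (isUnit_iff_isUnit_det A).1 hA
    rw [det_eq_zero_of_column_eq_zero j h] at hdet
    exact not_isUnit_zero hdet
  obtain ⟨r, hr, hmax⟩ := (Finset.univ.filter fun i => A i j ≠ 0).exists_max_image id
    ⟨i₀, Finset.mem_filter.2 ⟨Finset.mem_univ _, hi₀⟩⟩
  refine ⟨r, (Finset.mem_filter.1 hr).2, fun i hri => ?_⟩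
  by_contra hi
  exact (hmax i (by simpa using hi)).not_gt hri

variable {n : ℕ}

theorem exists_diagUnitriangularReduces_row_eq_single [Field R]
    {A : Matrix (Fin (n + 1)) (Fin (n + 1)) R} {r : Fin (n + 1)} (hr : A r 0 ≠ 0) :
    ∃ A₁, DiagUnitriangularReduces A A₁ ∧ A₁ r = Pi.single 0 1 ∧
      ∀ i, A i 0 = 0 → A₁ i 0 = 0 := by
  set d : Fin (n + 1) → R := Function.update 1 r (A r 0)⁻¹
  set A' := diagonal d * A
  set w : Fin (n + 1) → R := Function.update (A' r) 0 0
  -- the column operations `col j -= w j • col 0`; they are unitriangular because `w 0 = 0`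
  set U : Matrix (Fin (n + 1)) (Fin (n + 1)) R := 1 - vecMulVec (Pi.single 0 1) w
  have hA'r : A' r 0 = 1 := by simp [A', d, hr]
  have hentry : ∀ i j, (A' * U) i j = A' i j - A' i 0 * w j := by
    intro i j
    simp [U, mul_sub, mul_vecMulVec, vecMulVec_apply]
  refine ⟨A' * U, ⟨d, U, ?_, ⟨?_, ?_⟩, rfl⟩, ?_, ?_⟩
  · intro i
    by_cases hi : i = r
    · simp [d, hi, hr]
    · simp [d, hi]
  · intro i j hij
    have hi : i ≠ 0 := by rintro rfl; exact (Fin.zero_le j).not_gt hij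
    simp [U, one_apply_ne (ne_of_gt (show j < i from hij)), vecMulVec_apply, hi]
  · intro i
    by_cases hi : i = 0
    · simp [U, vecMulVec_apply, hi, w]
    · simp [U, vecMulVec_apply, hi]
  · ext j
    rw [hentry, hA'r, one_mul]
    by_cases hj : j = 0
    · simp [hj, w, hA'r]
    · simp [hj, w]
  · intro i hi
    simp [hentry, w, A', hi]

theorem isUnit_submatrix_succAbove_succ [CommRing R] {A : Matrix (Fin (n + 1)) (Fin (n + 1)) R}
    (hA : IsUnit A) {r : Fin (n + 1)} (hr : A r = Pi.single 0 1) :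
    IsUnit (A.submatrix r.succAbove Fin.succ) := by
  have hdet : A.det = (-1) ^ (r : ℕ) * (A.submatrix r.succAbove Fin.succ).det := by
    simp [det_succ_row A r, Fin.sum_univ_succ, hr]
  rw [isUnit_iff_isUnit_det] at hA ⊢
  rw [hdet] at hA
  exact isUnit_of_mul_isUnit_right hA

def extendByOne [Zero R] [One R] (U : Matrix (Fin n) (Fin n) R) :
    Matrix (Fin (n + 1)) (Fin (n + 1)) R :=
  of (Fin.cons (Pi.single 0 1) fun i => Fin.cons 0 (U i))

section ExtendByOne

variable [Zero R] [One R] (U : Matrix (Fin n) (Fin n) R)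

@[simp] theorem extendByOne_zero : U.extendByOne 0 = Pi.single 0 1 := rfl

@[simp] theorem extendByOne_succ_zero (i : Fin n) : U.extendByOne i.succ 0 = 0 := rfl

@[simp] theorem extendByOne_succ_succ (i j : Fin n) : U.extendByOne i.succ j.succ = U i j := rfl

theorem IsUpperUnitriangular.extendByOne {U : Matrix (Fin n) (Fin n) R}
    (hU : U.IsUpperUnitriangular) : U.extendByOne.IsUpperUnitriangular := by
  refine ⟨fun i j hij => ?_, fun i => ?_⟩
  · cases i using Fin.cases with
    | zero => exact absurd hij (Fin.not_lt_zero j)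
    | succ i =>
      cases j using Fin.cases with
      | zero => rfl
      | succ j => exact hU.1 (Fin.succ_lt_succ_iff.1 hij)
  · cases i using Fin.cases with
    | zero => simp
    | succ i => simp [hU.2]

end ExtendByOne

theorem mul_extendByOne_apply_zero [Semiring R] (A : Matrix m (Fin (n + 1)) R)
    (U : Matrix (Fin n) (Fin n) R) (i : m) : (A * U.extendByOne) i 0 = A i 0 := by
  simp [mul_apply, Fin.sum_univ_succ]

theorem mul_extendByOne_apply_succ [Semiring R] (A : Matrix m (Fin (n + 1)) R)
    (U : Matrix (Fin n) (Fin n) R) (i : m) (j : Fin n) :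
    (A * U.extendByOne) i j.succ = (A.submatrix id Fin.succ * U) i j := by
  simp [mul_apply, Fin.sum_univ_succ]

theorem DiagUnitriangularReduces.exists_of_submatrix [Semiring R]
    {A : Matrix (Fin (n + 1)) (Fin (n + 1)) R} {r : Fin (n + 1)} (hr : A r = Pi.single 0 1)
    {S' : Matrix (Fin n) (Fin n) R}
    (h : DiagUnitriangularReduces (A.submatrix r.succAbove Fin.succ) S') :
    ∃ S, DiagUnitriangularReduces A S ∧ S r = Pi.single 0 1 ∧
      (∀ i, A i 0 = 0 → S i 0 = 0) ∧ S.submatrix r.succAbove Fin.succ = S' := by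
  obtain ⟨d', U', hd', hU', rfl⟩ := h
  set d : Fin (n + 1) → R := r.insertNth 1 d'
  have hS : ∀ i j, (diagonal d * A * U'.extendByOne) i j = d i * (A * U'.extendByOne) i j := by
    intro i j
    rw [Matrix.mul_assoc, diagonal_mul]
  refine ⟨_, ⟨d, U'.extendByOne, fun i => ?_, hU'.extendByOne, rfl⟩, ?_, fun i hi => ?_, ?_⟩
  · cases i using Fin.succAboveCases r with
    | x => simp [d]
    | p i => simpa [d] using hd' i
  · ext j
    cases j using Fin.cases with
    | zero => simp [hS, mul_extendByOne_apply_zero, d, hr]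
    | succ j =>
      rw [hS, mul_extendByOne_apply_succ, mul_apply]
      simp [hr]
  · rw [hS, mul_extendByOne_apply_zero, hi, mul_zero]
  · ext i j
    rw [submatrix_apply, hS, mul_extendByOne_apply_succ, Matrix.mul_assoc, diagonal_mul]
    simp only [d, Fin.insertNth_apply_succAbove]
    rfl

theorem isPermShaped_succAboveCons [Zero R] [One R] {S : Matrix (Fin (n + 1)) (Fin (n + 1)) R}
    {r : Fin (n + 1)} {σ : Perm (Fin n)} (hrow : S r = Pi.single 0 1)
    (hcol : ∀ i, r < i → S i 0 = 0) (hS : IsPermShaped σ (S.submatrix r.succAbove Fin.succ)) :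
    IsPermShaped (σ.succAboveCons r) S := by
  refine ⟨fun j => ?_, fun i j hij => ?_⟩
  · cases j using Fin.cases with
    | zero => simp [hrow]
    | succ j => simpa using hS.1 j
  · cases i using Fin.succAboveCases r with
    | x =>
      cases j using Fin.cases with
      | zero => simp at hij
      | succ j => simp [hrow]
    | p i =>
      cases j using Fin.cases with
      | zero => exact hcol _ (by simpa using hij)
      | succ j => exact hS.2 i j (by simpa [Fin.succAbove_lt_succAbove_iff] using hij)

theorem exists_diagUnitriangularReduces_isPermShaped [Field R] :
    ∀ {n : ℕ} {A : Matrix (Fin n) (Fin n) R}, IsUnit A →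
      ∃ (π : Perm (Fin n)) (S : Matrix (Fin n) (Fin n) R),
        DiagUnitriangularReduces A S ∧ IsPermShaped π S
  | 0, A, _ => ⟨1, A, .refl A, finZeroElim, finZeroElim⟩
  | n + 1, A, hA => by
    obtain ⟨r, hr, hbelow⟩ := exists_lowest_ne_zero_of_isUnit hA 0
    obtain ⟨A₁, hAA₁, hrow, hcol⟩ := exists_diagUnitriangularReduces_row_eq_single hr
    have hminor := isUnit_submatrix_succAbove_succ (hAA₁.isUnit hA) hrow
    obtain ⟨σ, S', hS', hσ⟩ := exists_diagUnitriangularReduces_isPermShaped hminor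
    obtain ⟨S, hA₁S, hSrow, hScol, rfl⟩ := hS'.exists_of_submatrix hrow
    exact ⟨σ.succAboveCons r, S, hAA₁.trans hA₁S,
      isPermShaped_succAboveCons hSrow (fun i hi => hScol i (hcol i (hbelow i hi))) hσ⟩

end Matrix

theorem stmt_0_general (F : Type*) [Field F] (n : ℕ)
    (A : Matrix (Fin n) (Fin n) F) (hA : IsUnit A) :
    ∃ (π : Equiv.Perm (Fin n)) (d : Fin n → F) (U : Matrix (Fin n) (Fin n) F),
      (∀ i, IsUnit (d i)) ∧
      (∀ i j : Fin n, j < i → U i j = 0) ∧ (∀ i, U i i = 1) ∧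
      (∀ j, (Matrix.diagonal d * A * U) (π j) j = 1) ∧
      (∀ i j : Fin n, (π j < i ∨ π.symm i < j) → (Matrix.diagonal d * A * U) i j = 0) := by
  obtain ⟨π, _, ⟨d, U, hd, ⟨hUtri, hUdiag⟩, rfl⟩, hpivot, hzero⟩ :=
    Matrix.exists_diagUnitriangularReduces_isPermShaped hA
  exact ⟨π, d, U, hd, fun i j hij => hUtri hij, hUdiag, hpivot, hzero⟩

/-- For every `A ∈ GL(n,F)` there exist a permutation `π`,
an invertible diagonal matrix `D = diagonal d`, and an upper triangular matrix
`U` with unit diagonal such that `D·A·U` is `π`-shaped: its `(π j, j)`-entry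
is `1` for every `j`, and its `(i,j)`-entry vanishes whenever `i > π j` or
`j > π⁻¹ i`. -/
theorem stmt_0 (F : Type*) [Field F] (n : ℕ) (hn : 1 ≤ n)
    (A : Matrix (Fin n) (Fin n) F) (hA : IsUnit A) :
    ∃ (π : Equiv.Perm (Fin n)) (d : Fin n → F) (U : Matrix (Fin n) (Fin n) F),
      (∀ i, IsUnit (d i)) ∧
      (∀ i j : Fin n, j < i → U i j = 0) ∧ (∀ i, U i i = 1) ∧
      (∀ j, (Matrix.diagonal d * A * U) (π j) j = 1) ∧
      (∀ i j : Fin n, (π j < i ∨ π.symm i < j) → (Matrix.diagonal d * A * U) i j = 0) :=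
  stmt_0_general F n A hA
end

section
/- Let F be a field and n ≥ 1. Let π and π' be permutations of {1,…,n}, let S be a π-shaped matrix over F and S' a π'-shaped matrix over F, let D be an invertible diagonal matrix over F, and let U be an upper triangular matrix over F with all diagonal entries equal to 1. If S' = D·S·U, then π = π'. Consequently, the subsets B_π := { D·S·U : D invertible diagonal, S π-shaped, U upper triangular with unit diagonal } of GL(n,F) are pairwise disjoint as π ranges over the permutations of {1,…,n}. -/
/-!
For a matrix `M` and indices `i, j` consider the rank of the lower-left block of `M` formed by the
rows `≥ i` and the columns `≤ j`. Multiplying `M` on the left or on the right by an invertible upper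
triangular matrix multiplies this block by an invertible triangular block, so these ranks are
invariants of the double coset `B M B` of the upper triangular group. A `π`-shaped matrix is a unit
upper triangular matrix times the permutation matrix of `π`, whose block ranks count the `k ≤ j`
with `π k ≥ i`; comparing the counts at `j` with those before `j` recovers `π j`.
-/

/-- A matrix `S` is `π`-shaped: `S (π j) j = 1` for all `j`, and `S i j = 0`
whenever `i > π j` or `j > π⁻¹ i`. -/
def IsPiShaped {F : Type*} [Field F] {n : ℕ} (π : Equiv.Perm (Fin n))
    (S : Matrix (Fin n) (Fin n) F) : Prop :=
  (∀ j, S (π j) j = 1) ∧ ∀ i j : Fin n, (π j < i ∨ π.symm i < j) → S i j = 0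

/-- The path subset `B_π = { D·S·U }` with `D` invertible diagonal, `S`
`π`-shaped, and `U` upper triangular with unit diagonal. -/
def PathSubset (F : Type*) [Field F] (n : ℕ) (π : Equiv.Perm (Fin n)) :
    Set (Matrix (Fin n) (Fin n) F) :=
  {M | ∃ (d : Fin n → F) (S U : Matrix (Fin n) (Fin n) F),
    (∀ i, IsUnit (d i)) ∧ IsPiShaped π S ∧
    (∀ i j : Fin n, j < i → U i j = 0) ∧ (∀ i, U i i = 1) ∧
    M = Matrix.diagonal d * S * U}

open Finset
open scoped Matrix

namespace Matrix

variable {ι F : Type*} [Fintype ι] [LinearOrder ι] [Field F]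

noncomputable def cornerRank (M : Matrix ι ι F) (i j : ι) : ℕ :=
  (M.toBlock (i ≤ ·) (· ≤ j)).rank

theorem cornerRank_upperTriangular_mul {A : Matrix ι ι F} (hA : A.IsUpperTriangular)
    (hd : ∀ k, A k k ≠ 0) (M : Matrix ι ι F) (i j : ι) :
    cornerRank (A * M) i j = cornerRank M i j := by
  have hzero : A.toBlock (i ≤ ·) (¬i ≤ ·) = 0 := by
    ext ⟨r, hr⟩ ⟨k, hk⟩
    exact hA (lt_of_lt_of_le (not_le.1 hk) hr)
  have htri : (A.toBlock (i ≤ ·) (i ≤ ·)).IsUpperTriangular := fun r c h => hA h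
  rw [cornerRank, toBlock_mul_eq_add _ (i ≤ ·), hzero, Matrix.zero_mul, add_zero,
    rank_mul_eq_right_of_isUpperTriangular _ _ htri fun k => hd k]
  rfl

theorem cornerRank_mul_upperTriangular {B : Matrix ι ι F} (hB : B.IsUpperTriangular)
    (hd : ∀ k, B k k ≠ 0) (M : Matrix ι ι F) (i j : ι) :
    cornerRank (M * B) i j = cornerRank M i j := by
  have hzero : B.toBlock (¬· ≤ j) (· ≤ j) = 0 := by
    ext ⟨k, hk⟩ ⟨c, hc⟩
    exact hB (lt_of_le_of_lt hc (not_le.1 hk))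
  have hdet : IsUnit (B.toBlock (· ≤ j) (· ≤ j)).det := by
    have htri : (B.toBlock (· ≤ j) (· ≤ j)).IsUpperTriangular := fun r c h => hB h
    rw [isUnit_iff_ne_zero, det_of_isUpperTriangular htri]
    exact prod_ne_zero_iff.2 fun k _ => hd k
  rw [cornerRank, toBlock_mul_eq_add _ (· ≤ j), hzero, Matrix.mul_zero, add_zero,
    rank_mul_eq_left_of_isUnit_det _ _ hdet]
  rfl

end Matrix

namespace Equiv.Perm

variable {ι : Type*} [Fintype ι] [LinearOrder ι]

def cornerCount (π : Perm ι) (i j : ι) : ℕ :=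
  #{k | k ≤ j ∧ i ≤ π k}

theorem cornerCount_eq_card_lt_add (π : Perm ι) (i j : ι) :
    π.cornerCount i j = #{k | k < j ∧ i ≤ π k} + if i ≤ π j then 1 else 0 := by
  have hsplit : univ.filter (fun k => k ≤ j ∧ i ≤ π k) =
      univ.filter (fun k => k < j ∧ i ≤ π k) ∪ univ.filter (fun k => k = j ∧ i ≤ π k) := by
    simp only [← filter_or, le_iff_lt_or_eq, or_and_right]
  rw [cornerCount, hsplit, card_union_of_disjoint (disjoint_filter.2 fun k _ h h' => h.1.ne h'.1)]
  congr 1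
  rw [filter_and, filter_eq', if_pos (mem_univ j)]
  split_ifs <;> simp [*]

theorem eq_of_cornerCount_eq {π π' : Perm ι}
    (h : ∀ i j, π.cornerCount i j = π'.cornerCount i j) : π = π' := by
  ext1 j
  induction j using WellFoundedLT.induction with
  | ind j ih =>
    have hbefore : ∀ i, #{k | k < j ∧ i ≤ π k} = #{k | k < j ∧ i ≤ π' k} := fun i =>
      congrArg card (filter_congr fun k _ => by grind)
    refine eq_of_forall_le_iff fun i => ?_
    have hcount := h i j
    rw [cornerCount_eq_card_lt_add, cornerCount_eq_card_lt_add, hbefore] at hcount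
    split_ifs at hcount <;> grind

theorem cornerRank_permMatrix {F : Type*} [Field F] (π : Perm ι) (i j : ι) :
    ((π⁻¹).permMatrix F).cornerRank i j = π.cornerCount i j := by
  set B := ((π⁻¹).permMatrix F).toBlock (i ≤ ·) (· ≤ j)
  apply le_antisymm
  · rw [Matrix.cornerRank, ← Matrix.rank_transpose]
    refine (Bᵀ.rank_le_card_of_support_subset
      ((univ.filter fun k => i ≤ π k).subtype (· ≤ j)) ?_).trans_eq ?_
    · intro c hc
      obtain ⟨r, hr⟩ := Function.ne_iff.1 hc
      have hrc : π.symm r = c := by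
        by_contra hne
        exact hr (by simp [B, hne])
      simpa [← hrc] using r.2
    · rw [card_subtype, filter_filter, cornerCount]
      simp only [and_comm]
  · have hid : B.submatrix (fun k : {k // k ≤ j ∧ i ≤ π k} => ⟨π k, k.2.2⟩)
        (fun k : {k // k ≤ j ∧ i ≤ π k} => ⟨k, k.2.1⟩) = 1 := by
      ext k l
      simp [B, Matrix.one_apply, Subtype.val_inj]
    calc π.cornerCount i j = Fintype.card {k // k ≤ j ∧ i ≤ π k} :=
          (Fintype.card_subtype _).symm
      _ = (1 : Matrix {k // k ≤ j ∧ i ≤ π k} _ F).rank := Matrix.rank_one.symm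
      _ ≤ B.rank := hid ▸ B.rank_submatrix_le _ _

end Equiv.Perm

section PathSubset

open Matrix

variable {F : Type*} [Field F] {n : ℕ}

theorem IsPiShaped.cornerRank_eq_cornerCount {π : Equiv.Perm (Fin n)}
    {S : Matrix (Fin n) (Fin n) F} (hS : IsPiShaped π S) (i j : Fin n) :
    S.cornerRank i j = π.cornerCount i j := by
  have hfactor : S = S.submatrix id π.symm * (π⁻¹).permMatrix F := by
    rw [PEquiv.mul_toMatrix_toPEquiv, submatrix_submatrix, Equiv.Perm.inv_def, Equiv.symm_symm,
      Equiv.symm_comp_self, Function.comp_id, submatrix_id_id]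
  have htri : (S.submatrix id π.symm).IsUpperTriangular := fun r m h =>
    hS.2 r (π.symm m) (Or.inl (by simpa using h))
  have hdiag : ∀ k, S.submatrix id π.symm k k ≠ 0 := fun k => by
    simpa using (hS.1 (π.symm k)).trans_ne one_ne_zero
  rw [hfactor, cornerRank_upperTriangular_mul htri hdiag, π.cornerRank_permMatrix]

theorem IsPiShaped.mem_pathSubset {π : Equiv.Perm (Fin n)} {S : Matrix (Fin n) (Fin n) F}
    (hS : IsPiShaped π S) : S ∈ PathSubset F n π :=
  ⟨1, S, 1, fun _ => isUnit_one, hS, fun _ _ h => one_apply_ne h.ne', fun _ => one_apply_eq _,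
    by simp⟩

theorem cornerRank_eq_cornerCount_of_mem_pathSubset {π : Equiv.Perm (Fin n)}
    {M : Matrix (Fin n) (Fin n) F} (hM : M ∈ PathSubset F n π) (i j : Fin n) :
    M.cornerRank i j = π.cornerCount i j := by
  obtain ⟨d, S, U, hd, hS, hU, hU1, rfl⟩ := hM
  rw [cornerRank_mul_upperTriangular (fun r c h => hU r c h) (by simp [hU1]),
    cornerRank_upperTriangular_mul (blockTriangular_diagonal d)
      (by simpa using fun k => (hd k).ne_zero),
    hS.cornerRank_eq_cornerCount]

theorem perm_eq_of_mem_pathSubset {π π' : Equiv.Perm (Fin n)} {M : Matrix (Fin n) (Fin n) F}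
    (h : M ∈ PathSubset F n π) (h' : M ∈ PathSubset F n π') : π = π' :=
  Equiv.Perm.eq_of_cornerCount_eq fun i j =>
    (cornerRank_eq_cornerCount_of_mem_pathSubset h i j).symm.trans
      (cornerRank_eq_cornerCount_of_mem_pathSubset h' i j)

end PathSubset

theorem stmt_1_general (F : Type*) [Field F] (n : ℕ) :
    (∀ (π π' : Equiv.Perm (Fin n)) (S S' : Matrix (Fin n) (Fin n) F)
      (d : Fin n → F) (U : Matrix (Fin n) (Fin n) F),
      IsPiShaped π S → IsPiShaped π' S' →
      (∀ i, IsUnit (d i)) →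
      (∀ i j : Fin n, j < i → U i j = 0) → (∀ i, U i i = 1) →
      S' = Matrix.diagonal d * S * U → π = π') ∧
    (∀ π π' : Equiv.Perm (Fin n), π ≠ π' →
      Disjoint (PathSubset F n π) (PathSubset F n π')) :=
  ⟨fun _ _ S _ d U hS hS' hd hU hU1 h =>
      perm_eq_of_mem_pathSubset ⟨d, S, U, hd, hS, hU, hU1, h⟩ hS'.mem_pathSubset,
    fun _ _ hne => Set.disjoint_left.2 fun _ h h' => hne (perm_eq_of_mem_pathSubset h h')⟩

/-- If `S' = D·S·U` with `S` `π`-shaped, `S'` `π'`-shaped,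
`D` invertible diagonal and `U` upper triangular with unit diagonal, then
`π = π'`; consequently, the subsets `B_π ⊆ GL(n,F)` are pairwise disjoint. -/
theorem stmt_1 (F : Type*) [Field F] (n : ℕ) (hn : 1 ≤ n) :
    (∀ (π π' : Equiv.Perm (Fin n)) (S S' : Matrix (Fin n) (Fin n) F)
      (d : Fin n → F) (U : Matrix (Fin n) (Fin n) F),
      IsPiShaped π S → IsPiShaped π' S' →
      (∀ i, IsUnit (d i)) →
      (∀ i j : Fin n, j < i → U i j = 0) → (∀ i, U i i = 1) →
      S' = Matrix.diagonal d * S * U → π = π') ∧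
    (∀ π π' : Equiv.Perm (Fin n), π ≠ π' →
      Disjoint (PathSubset F n π) (PathSubset F n π')) :=
  stmt_1_general F n
end

section
/- Let R be a (possibly noncommutative) unital ring, n ≥ 1, and π a permutation of {1,…,n}. Suppose D and D' are n×n diagonal matrices over R all of whose diagonal entries are units of R; suppose S and S' are π-shaped matrices over R; and suppose X and X' are strictly upper triangular n×n matrices over R. If D·S·(I+X) = D'·S'·(I+X'), then D = D', S = S', and X = X'. -/
/-!
Permuting the rows of `D·S` by `π` gives a lower triangular matrix with unit diagonal, so the
hypothesis is an equality of two LU decompositions with unipotent upper factors. Such a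
decomposition is unique over any ring: column `k` of the lower factor and row `k` of the upper
factor are determined by the columns and rows of smaller index.
-/

open Finset OrderDual

namespace Matrix

variable {ι R : Type*} [Fintype ι] [Ring R]

section DecidableEq

variable [DecidableEq ι]

theorem mul_one_add_apply (L X : Matrix ι ι R) (i j : ι) :
    (L * (1 + X)) i j = L i j + ∑ l, L i l * X l j := by
  rw [Matrix.mul_add, Matrix.mul_one, add_apply, mul_apply]

theorem eq_of_diagonal_mul_eq (π : Equiv.Perm ι) {d d' : ι → R} {S S' : Matrix ι ι R}
    (hS : ∀ j, S (π j) j = 1) (hS' : ∀ j, S' (π j) j = 1) (hd : ∀ i, IsLeftRegular (d i))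
    (h : diagonal d * S = diagonal d' * S') : d = d' ∧ S = S' := by
  have entry : ∀ i j, d i * S i j = d' i * S' i j := by
    intro i j
    simpa using congrFun (congrFun h i) j
  have hdd : d = d' := funext <| π.surjective.forall.2 fun j => by
    simpa [hS j, hS' j] using entry (π j) j
  subst hdd
  exact ⟨rfl, ext fun i j => hd i (entry i j)⟩

end DecidableEq

variable [LinearOrder ι]

theorem IsLowerTriangular.mul_one_add_inj {L L' X X' : Matrix ι ι R}
    (hL : L.IsLowerTriangular) (hL' : L'.IsLowerTriangular) (hreg : ∀ i, IsLeftRegular (L i i))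
    (hX : ∀ i j, j ≤ i → X i j = 0) (hX' : ∀ i j, j ≤ i → X' i j = 0) :
    L * (1 + X) = L' * (1 + X') ↔ L = L' ∧ X = X' := by
  refine ⟨fun h => ?_, by rintro ⟨rfl, rfl⟩; rfl⟩
  have entry : ∀ i j, L i j + ∑ l, L i l * X l j = L' i j + ∑ l, L' i l * X' l j := by
    intro i j
    simpa only [mul_one_add_apply] using congrFun (congrFun h i) j
  have key : ∀ k, (∀ i, L i k = L' i k) ∧ ∀ j, X k j = X' k j := by
    intro k
    induction k using WellFoundedLT.induction with | _ k ih => ?_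
    have col : ∀ i, L i k = L' i k := by
      intro i
      have hsum : ∑ l, L i l * X l k = ∑ l, L' i l * X' l k := by
        refine sum_congr rfl fun l _ => ?_
        rcases lt_or_ge l k with hlk | hkl
        · rw [(ih l hlk).1 i, (ih l hlk).2 k]
        · rw [hX l k hkl, hX' l k hkl, mul_zero, mul_zero]
      simpa only [hsum, add_left_inj] using entry i k
    refine ⟨col, fun j => ?_⟩
    rcases le_or_gt j k with hjk | hkj
    · rw [hX k j hjk, hX' k j hjk]
    have hrest :
        ∑ l ∈ univ.erase k, L k l * X l j = ∑ l ∈ univ.erase k, L' k l * X' l j := by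
      refine sum_congr rfl fun l hl => ?_
      rcases lt_or_gt_of_ne (ne_of_mem_erase hl) with hlk | hkl
      · rw [(ih l hlk).1 k, (ih l hlk).2 j]
      · rw [hL (toDual_lt_toDual.2 hkl), hL' (toDual_lt_toDual.2 hkl), zero_mul, zero_mul]
    have hk := entry k j
    rw [hL (toDual_lt_toDual.2 hkj), hL' (toDual_lt_toDual.2 hkj),
      ← add_sum_erase _ _ (mem_univ k), ← add_sum_erase _ _ (mem_univ k), hrest, zero_add,
      zero_add, add_left_inj, ← col k] at hk
    exact hreg k hk
  exact ⟨ext fun i k => (key k).1 i, ext fun k j => (key k).2 j⟩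

theorem isLowerTriangular_submatrix_diagonal_mul (π : Equiv.Perm ι) (d : ι → R)
    {S : Matrix ι ι R} (hS : ∀ i j, π.symm i < j → S i j = 0) :
    ((diagonal d * S).submatrix π id).IsLowerTriangular := by
  intro k j hjk
  rw [toDual_lt_toDual] at hjk
  simp [hS (π k) j (by simpa using hjk)]

end Matrix

theorem stmt_3_general (R : Type*) [Ring R] (n : ℕ) (π : Equiv.Perm (Fin n))
    (d d' : Fin n → R) (hd : ∀ i, IsUnit (d i))
    (S S' : Matrix (Fin n) (Fin n) R)
    (hS : (∀ j, S (π j) j = 1) ∧ ∀ i j : Fin n, (π j < i ∨ π.symm i < j) → S i j = 0)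
    (hS' : (∀ j, S' (π j) j = 1) ∧ ∀ i j : Fin n, (π j < i ∨ π.symm i < j) → S' i j = 0)
    (X X' : Matrix (Fin n) (Fin n) R)
    (hX : ∀ i j : Fin n, j ≤ i → X i j = 0) (hX' : ∀ i j : Fin n, j ≤ i → X' i j = 0)
    (h : Matrix.diagonal d * S * (1 + X) = Matrix.diagonal d' * S' * (1 + X')) :
    d = d' ∧ S = S' ∧ X = X' := by
  have hrows : (Matrix.diagonal d * S).submatrix π id * (1 + X) =
      (Matrix.diagonal d' * S').submatrix π id * (1 + X') := by
    simpa only [Matrix.submatrix_mul _ _ π id id Function.bijective_id,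
      Matrix.submatrix_id_id] using congrArg (·.submatrix π id) h
  obtain ⟨hL, rfl⟩ := ((Matrix.isLowerTriangular_submatrix_diagonal_mul π d
      fun i j hij => hS.2 i j (Or.inr hij)).mul_one_add_inj
    (Matrix.isLowerTriangular_submatrix_diagonal_mul π d' fun i j hij => hS'.2 i j (Or.inr hij))
    (fun k => by simpa [hS.1 k] using (hd (π k)).isRegular.left) hX hX').1 hrows
  have hDS : Matrix.diagonal d * S = Matrix.diagonal d' * S' := by
    ext i j
    simpa using congrFun (congrFun hL (π.symm i)) j
  obtain ⟨rfl, rfl⟩ :=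
    Matrix.eq_of_diagonal_mul_eq π hS.1 hS'.1 (fun i => (hd i).isRegular.left) hDS
  exact ⟨rfl, rfl, rfl⟩

/-- Over any unital ring `R`: if `D·S·(I+X) = D'·S'·(I+X')`
where `D, D'` are diagonal matrices with unit diagonal entries, `S, S'` are
`π`-shaped, and `X, X'` are strictly upper triangular, then `D = D'`,
`S = S'`, and `X = X'`. -/
theorem stmt_3 (R : Type*) [Ring R] (n : ℕ) (hn : 1 ≤ n) (π : Equiv.Perm (Fin n))
    (d d' : Fin n → R) (hd : ∀ i, IsUnit (d i)) (hd' : ∀ i, IsUnit (d' i))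
    (S S' : Matrix (Fin n) (Fin n) R)
    (hS : (∀ j, S (π j) j = 1) ∧ ∀ i j : Fin n, (π j < i ∨ π.symm i < j) → S i j = 0)
    (hS' : (∀ j, S' (π j) j = 1) ∧ ∀ i j : Fin n, (π j < i ∨ π.symm i < j) → S' i j = 0)
    (X X' : Matrix (Fin n) (Fin n) R)
    (hX : ∀ i j : Fin n, j ≤ i → X i j = 0) (hX' : ∀ i j : Fin n, j ≤ i → X' i j = 0)
    (h : Matrix.diagonal d * S * (1 + X) = Matrix.diagonal d' * S' * (1 + X')) :
    d = d' ∧ S = S' ∧ X = X' :=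
  stmt_3_general R n π d d' hd S S' hS hS' X X' hX hX' h
end

section
/- Let m be an odd positive integer and let s : ℤ → ℤ be a finitely supported function. Then the sequence N ↦ Σ_{k ∈ ℤ, |k| ≤ 2mN, k ≡ 0 (mod m)} X^k(s) is eventually constant, and its eventual value equals Σ_{l=0}^{m-1} (-1)^l ( Σ_{i ≡ l (mod m)} s_i ). -/
/-- The weight `η^k(l)`, equal to `(-1)^(l-k)` for `l ≥ k` and `(-1)^(l-k+1)`
for `l < k`. -/
def eta (k l : ℤ) : ℤ :=
  if k ≤ l then (-1) ^ (l - k).natAbs else (-1) ^ ((k - l).natAbs + 1)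

/-- The shifted Euler characteristic
`X^k(s) = Σ_{l ≥ 0} (-1)^l s_{k+l} + Σ_{l < 0} (-1)^{l+1} s_{k+l} = Σ_l η^k(l) s_l`. -/
noncomputable def Xchi (k : ℤ) (s : ℤ → ℤ) : ℤ := ∑ᶠ l : ℤ, eta k l * s l

/-!
Write `η^k(l) = ±(-1)^(l-k)`, the sign being `+` exactly when `k ≤ l`. For `k = m j` with `m`
odd, `(-1)^(l - m j) = (-1)^l (-1)^j`, and `m j ≤ l` iff `j ≤ c := ⌊l / m⌋`. Since
`2 Σ_{j=a}^{b} (-1)^j = (-1)^a + (-1)^b`, the alternating sum over `-2N ≤ j ≤ 2N` whose sign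
flips after `c` equals `(-1)^c` once `|c| ≤ N`. So for large `N` every `s_l` enters with the sign
`(-1)^(l - m c) = (-1)^(l mod m)`, and grouping the `l` by residue gives the right-hand side.
-/

open Finset

lemma Int.negOnePow_mul_of_odd {m : ℤ} (hm : Odd m) (j : ℤ) :
    (m * j).negOnePow = j.negOnePow := by
  rw [Int.negOnePow_eq_iff, ← sub_one_mul]
  exact (hm.sub_odd odd_one).mul_right j

lemma two_mul_sum_Icc_negOnePow {a b : ℤ} (h : a - 1 ≤ b) :
    2 * ∑ j ∈ Icc a b, (j.negOnePow : ℤ) = a.negOnePow + b.negOnePow := by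
  induction b, h using Int.leInduction with
  | base => simp [Int.negOnePow_sub]
  | succ b hb ih =>
    rw [← insert_Icc_right_eq_Icc_add_one (by omega), sum_insert (by simp), mul_add, ih,
      Int.negOnePow_succ]
    push_cast
    ring

lemma sum_Icc_ite_le_mul_negOnePow {a b c : ℤ} (hac : a - 1 ≤ c) (hcb : c ≤ b)
    (hab : Even (b - a)) :
    ∑ j ∈ Icc a b, (if j ≤ c then 1 else -1) * (j.negOnePow : ℤ) = c.negOnePow := by
  have hfilter : (Icc a b).filter (· ≤ c) = Icc a c := by
    ext j; simp only [mem_filter, mem_Icc]; omega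
  have hsplit : ∀ j, (if j ≤ c then 1 else -1) * (j.negOnePow : ℤ)
      = 2 * (if j ≤ c then (j.negOnePow : ℤ) else 0) - j.negOnePow := by
    intro j; split_ifs <;> ring
  have hend : (b.negOnePow : ℤ) = a.negOnePow := by
    rw [(Int.negOnePow_eq_iff b a).mpr hab]
  have htotal := two_mul_sum_Icc_negOnePow (show a - 1 ≤ b by omega)
  have hlow := two_mul_sum_Icc_negOnePow hac
  rw [sum_congr rfl fun j _ => hsplit j, sum_sub_distrib, ← mul_sum, ← sum_filter, hfilter]
  linarith

lemma eta_eq_ite_mul_negOnePow (k l : ℤ) :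
    eta k l = (if k ≤ l then 1 else -1) * ((l - k).negOnePow : ℤ) := by
  unfold eta
  split_ifs with h
  · rw [one_mul]
    exact_mod_cast (Int.coe_negOnePow ℤ _).symm
  · rw [pow_succ, ← Int.negOnePow_neg, neg_sub, mul_neg_one, neg_one_mul]
    exact_mod_cast congrArg Neg.neg (Int.coe_negOnePow ℤ _).symm

lemma Int.filter_dvd_Icc_mul_eq_image {m : ℤ} (hm : 0 < m) (a b : ℤ) :
    (Icc (m * a) (m * b)).filter (m ∣ ·) = (Icc a b).image (m * ·) := by
  ext k
  simp only [mem_filter, mem_Icc, mem_image]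
  constructor
  · rintro ⟨⟨hak, hkb⟩, j, rfl⟩
    exact ⟨j, ⟨le_of_mul_le_mul_left hak hm, le_of_mul_le_mul_left hkb hm⟩, rfl⟩
  · rintro ⟨j, ⟨haj, hjb⟩, rfl⟩
    exact ⟨⟨mul_le_mul_of_nonneg_left haj hm.le, mul_le_mul_of_nonneg_left hjb hm.le⟩,
      j, rfl⟩

lemma sum_filter_dvd_Icc_eta {m : ℤ} (hm : 0 < m) (hodd : Odd m) {a b : ℤ} (l : ℤ)
    (ha : a - 1 ≤ l / m) (hb : l / m ≤ b) (hab : Even (b - a)) :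
    ∑ k ∈ (Icc (m * a) (m * b)).filter (m ∣ ·), eta k l = ((l % m).negOnePow : ℤ) := by
  have hterm : ∀ j, eta (m * j) l = (l % m).negOnePow * (l / m).negOnePow *
      ((if j ≤ l / m then 1 else -1) * j.negOnePow) := by
    intro j
    have hsign : m * j ≤ l ↔ j ≤ l / m := by rw [Int.le_ediv_iff_mul_le hm, mul_comm]
    have hl : l.negOnePow = (l % m).negOnePow * (l / m).negOnePow := by
      conv_lhs => rw [← Int.mul_ediv_add_emod l m]
      rw [Int.negOnePow_add, Int.negOnePow_mul_of_odd hodd, mul_comm]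
    rw [eta_eq_ite_mul_negOnePow, Int.negOnePow_sub, Int.negOnePow_mul_of_odd hodd, hl,
      if_congr hsign rfl rfl]
    push_cast
    ring
  rw [Int.filter_dvd_Icc_mul_eq_image hm,
    sum_image fun _ _ _ _ h => mul_left_cancel₀ hm.ne' h, sum_congr rfl fun j _ => hterm j, ← mul_sum, sum_Icc_ite_le_mul_negOnePow ha hb hab,
    mul_assoc, ← Units.val_mul, Int.units_mul_self, Units.val_one, mul_one]

lemma Xchi_eq_sum_support (k : ℤ) (s : ℤ →₀ ℤ) : Xchi k s = ∑ l ∈ s.support, eta k l * s l :=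
  finsum_eq_sum_of_support_subset _ <|
    (Function.support_mul_subset_right _ _).trans s.fun_support_eq.subset

lemma sum_negOnePow_emod_mul_eq_sum_range {m : ℕ} (hm : 0 < m) (t : Finset ℤ) (f : ℤ → ℤ) :
    ∑ i ∈ t, ((i % m).negOnePow : ℤ) * f i
      = ∑ r ∈ range m, (-1) ^ r * ∑ i ∈ t.filter (fun i => i % (m : ℤ) = r), f i := by
  have hmaps : ∀ i ∈ t, i % (m : ℤ) ∈ (range m).map Nat.castEmbedding := by
    intro i _
    have := Int.emod_nonneg i (Int.natCast_pos.2 hm).ne'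
    have := Int.emod_lt_of_pos i (Int.natCast_pos.2 hm)
    simp only [mem_map, mem_range, Nat.castEmbedding_apply]
    exact ⟨(i % m).toNat, by omega, by omega⟩
  rw [← sum_fiberwise_of_maps_to hmaps, sum_map]
  refine sum_congr rfl fun r _ => ?_
  rw [mul_sum]
  refine sum_congr rfl fun i hi => ?_
  rw [(mem_filter.1 hi).2, Int.coe_negOnePow_natCast]

theorem stmt_5_general (m : ℕ) (hodd : Odd m) (s : ℤ →₀ ℤ) :
    ∃ N₀ : ℕ, ∀ N ≥ N₀,
      (∑ k ∈ (Finset.Icc (-(2 * (m : ℤ) * (N : ℤ))) (2 * (m : ℤ) * (N : ℤ))).filter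
          (fun k => (m : ℤ) ∣ k), Xchi k s) =
      ∑ l ∈ Finset.range m, (-1) ^ l *
        ∑ i ∈ s.support.filter (fun i => i % (m : ℤ) = (l : ℤ)), s i := by
  refine ⟨s.support.sup fun l => (l / (m : ℤ)).natAbs, fun N hN => ?_⟩
  have hIcc : Icc (-(2 * (m : ℤ) * N)) (2 * m * N) =
      Icc (m * -(2 * (N : ℤ))) (m * (2 * N)) := by
    congr 1 <;> ring
  simp_rw [Xchi_eq_sum_support, hIcc]
  rw [sum_comm, ← sum_negOnePow_emod_mul_eq_sum_range hodd.pos]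
  refine sum_congr rfl fun l hl => ?_
  have hquot : (l / (m : ℤ)).natAbs ≤ N :=
    (le_sup (f := fun l => (l / (m : ℤ)).natAbs) hl).trans hN
  rw [← sum_mul, sum_filter_dvd_Icc_eta (by exact_mod_cast hodd.pos) (by exact_mod_cast hodd) l
    (by omega) (by omega) ⟨2 * N, by ring⟩]

/-- For odd `m > 0` and finitely supported `s : ℤ → ℤ`, the
sequence `N ↦ Σ_{|k| ≤ 2mN, k ≡ 0 (mod m)} X^k(s)` is eventually constant with
eventual value `Σ_{l=0}^{m-1} (-1)^l (Σ_{i ≡ l (mod m)} s_i)`. -/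
theorem stmt_5 (m : ℕ) (hodd : Odd m) (hm : 0 < m) (s : ℤ →₀ ℤ) :
    ∃ N₀ : ℕ, ∀ N ≥ N₀,
      (∑ k ∈ (Finset.Icc (-(2 * (m : ℤ) * (N : ℤ))) (2 * (m : ℤ) * (N : ℤ))).filter
          (fun k => (m : ℤ) ∣ k), Xchi k s) =
      ∑ l ∈ Finset.range m, (-1) ^ l *
        ∑ i ∈ s.support.filter (fun i => i % (m : ℤ) = (l : ℤ)), s i :=
  stmt_5_general m hodd s
end

section
/- Let m be an odd positive integer, let r be an integer with 1 ≤ r ≤ m−1, and let s : ℤ → ℤ be a finitely supported function. Then the sequence N ↦ Σ_{k ∈ ℤ, |k| ≤ 2mN, k ≡ r (mod m)} X^k(s) is eventually constant, and its eventual value equals 2·Σ_{l=0}^{m-1} (-1)^l ( Σ_{i ≡ r+l (mod 2m)} s_i ). -/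
open Finset

lemma eta_add_eta_add_odd (k l : ℤ) {m : ℕ} (hm : Odd m) :
    eta k l + eta (k + m) l = if k ≤ l ∧ l < k + m then 2 * ((l - k).negOnePow : ℤ) else 0 := by
  have hsign : (l - (k + m)).negOnePow = -(l - k).negOnePow := by
    rw [← sub_sub, Int.negOnePow_sub, Int.negOnePow_odd (m : ℤ) (by exact_mod_cast hm),
      mul_neg_one]
  rw [eta_eq_ite_mul_negOnePow, eta_eq_ite_mul_negOnePow, hsign]
  have : (0 : ℤ) ≤ m := by positivity
  split_ifs <;> push_cast <;> omega

lemma Xchi_add_Xchi_add_odd (k : ℤ) {m : ℕ} (hm : Odd m) (s : ℤ →₀ ℤ) :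
    Xchi k s + Xchi (k + m) s = 2 * ∑ i ∈ range m, (-1) ^ i * s (k + i) := by
  have hfin (j : ℤ) : (Function.support fun l => eta j l * s l).Finite :=
    s.hasFiniteSupport.subset fun l hl => right_ne_zero_of_mul (Function.mem_support.1 hl)
  have hinj : Set.InjOn (fun i : ℕ => k + i) ↑(range m) := fun i _ j _ h => by simpa using h
  rw [Xchi, Xchi, ← finsum_add_distrib (hfin k) (hfin _)]
  simp_rw [← add_mul, eta_add_eta_add_odd _ _ hm]
  rw [finsum_eq_sum_of_support_subset _ (s := (range m).image fun i : ℕ => k + i), sum_image hinj,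
    mul_sum]
  · refine sum_congr rfl fun i hi => ?_
    rw [if_pos (by simp only [mem_range] at hi; omega), add_sub_cancel_left,
      Int.coe_negOnePow_natCast, mul_assoc]
  · intro l hl
    have : k ≤ l ∧ l < k + m := by by_contra h; simp [h] at hl
    simp only [coe_image, coe_range, Set.mem_image, Set.mem_Iio]
    exact ⟨(l - k).toNat, by omega, by omega⟩

lemma emod_eq_iff_emod_two_mul {m r : ℤ} (hr : 0 ≤ r) (hrm : r < m) (k : ℤ) :
    k % m = r ↔ k % (2 * m) = r ∨ k % (2 * m) = r + m := by
  have h0 := Int.emod_nonneg k (show 2 * m ≠ 0 by omega)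
  have h1 := Int.emod_lt_of_pos k (show 0 < 2 * m by omega)
  rw [← Int.emod_emod_of_dvd k (dvd_mul_left m 2)]
  by_cases h : k % (2 * m) < m
  · rw [Int.emod_eq_of_lt h0 h]
    omega
  · have : k % (2 * m) % m = k % (2 * m) - m := by
      conv_lhs => rw [← sub_add_cancel (k % (2 * m)) m]
      rw [Int.add_emod_right, Int.emod_eq_of_lt (by omega) (by omega)]
    omega

lemma sum_filter_emod_eq_add {β : Type*} [AddCommMonoid β] (f : ℤ → β) (S : Finset ℤ)
    {m r : ℤ} (hr : 0 ≤ r) (hrm : r < m) :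
    ∑ k ∈ S.filter (fun k => k % m = r), f k =
      ∑ k ∈ S.filter (fun k => k % (2 * m) = r), f k +
        ∑ k ∈ S.filter (fun k => k % (2 * m) = r + m), f k := by
  rw [filter_congr fun k _ => emod_eq_iff_emod_two_mul hr hrm k, filter_or, sum_union]
  exact disjoint_filter.2 fun k _ h => by omega

lemma Icc_filter_emod_eq_image {n c : ℤ} (hc : 0 < c) (hcn : c < n) (M : ℤ) :
    (Icc (-(n * M)) (n * M)).filter (fun k => k % n = c) =
      (Ico (-M) M).image fun t => c + n * t := by
  ext k
  simp only [mem_filter, mem_Icc, mem_image, mem_Ico]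
  constructor
  · rintro ⟨⟨hlo, hhi⟩, hk⟩
    have hdiv := Int.mul_ediv_add_emod k n
    rw [hk] at hdiv
    refine ⟨k / n, ⟨?_, ?_⟩, by linarith⟩
    · by_contra h
      nlinarith
    · by_contra h
      nlinarith
  · rintro ⟨t, ⟨hlo, hhi⟩, rfl⟩
    refine ⟨⟨by nlinarith, by nlinarith⟩, ?_⟩
    rw [Int.add_mul_emod_self_left, Int.emod_eq_of_lt hc.le hcn]

lemma sum_Icc_filter_emod {β : Type*} [AddCommMonoid β] (f : ℤ → β) {n c : ℤ} (hc : 0 < c)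
    (hcn : c < n) (M : ℤ) :
    ∑ k ∈ (Icc (-(n * M)) (n * M)).filter (fun k => k % n = c), f k =
      ∑ t ∈ Ico (-M) M, f (c + n * t) := by
  rw [Icc_filter_emod_eq_image hc hcn, sum_image]
  intro t _ u _ h
  have : n * t = n * u := by simpa using h
  exact mul_left_cancel₀ (by omega) this

lemma sum_support_filter_emod (s : ℤ →₀ ℤ) {n c : ℤ} (hc : 0 < c) (hcn : c < n) {M : ℤ}
    (hs : s.support ⊆ Icc (-(n * M)) (n * M)) :
    ∑ i ∈ s.support.filter (fun i => i % n = c), s i = ∑ t ∈ Ico (-M) M, s (c + n * t) := by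
  rw [← sum_Icc_filter_emod s hc hcn]
  refine sum_subset (filter_subset_filter _ hs) fun i hi hi' => ?_
  rw [mem_filter] at hi hi'
  exact Finsupp.notMem_support_iff.1 fun h => hi' ⟨h, hi.2⟩

theorem stmt_6_general (m : ℕ) (hodd : Odd m) (r : ℕ) (hr1 : 1 ≤ r)
    (hr2 : r ≤ m - 1) (s : ℤ →₀ ℤ) :
    ∃ N₀ : ℕ, ∀ N ≥ N₀,
      (∑ k ∈ (Finset.Icc (-(2 * (m : ℤ) * (N : ℤ))) (2 * (m : ℤ) * (N : ℤ))).filter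
          (fun k => k % (m : ℤ) = (r : ℤ)), Xchi k s) =
      2 * ∑ l ∈ Finset.range m, (-1) ^ l *
        ∑ i ∈ s.support.filter (fun i => i % (2 * (m : ℤ)) = (r : ℤ) + (l : ℤ)), s i := by
  have hm := hodd.pos
  refine ⟨s.support.sup Int.natAbs, fun N hN => ?_⟩
  have hsupp : s.support ⊆ Icc (-(2 * (m : ℤ) * N)) (2 * m * N) := fun l hl => by
    have hl : l.natAbs ≤ N := (le_sup hl).trans hN
    have : (N : ℤ) ≤ 2 * m * N := by nlinarith
    rw [mem_Icc]; omega
  rw [sum_filter_emod_eq_add _ _ (by omega) (by omega), sum_Icc_filter_emod _ (by omega) (by omega),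
    sum_Icc_filter_emod _ (by omega) (by omega), ← sum_add_distrib]
  calc _ = ∑ t ∈ Ico (-(N : ℤ)) N, 2 * ∑ i ∈ range m, (-1) ^ i * s (r + 2 * m * t + i) :=
        sum_congr rfl fun t _ => by rw [add_right_comm (r : ℤ) m, Xchi_add_Xchi_add_odd _ hodd]
    _ = _ := by
      rw [← mul_sum, sum_comm]
      congr 1
      refine sum_congr rfl fun i hi => ?_
      rw [← mul_sum, sum_support_filter_emod s (by omega) (by rw [mem_range] at hi; omega) hsupp]
      simp only [add_right_comm]

/-- For odd `m > 0`, `1 ≤ r ≤ m-1`, and finitely supported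
`s : ℤ → ℤ`, the sequence `N ↦ Σ_{|k| ≤ 2mN, k ≡ r (mod m)} X^k(s)` is
eventually constant with eventual value
`2·Σ_{l=0}^{m-1} (-1)^l (Σ_{i ≡ r+l (mod 2m)} s_i)`. -/
theorem stmt_6 (m : ℕ) (hodd : Odd m) (hm : 0 < m) (r : ℕ) (hr1 : 1 ≤ r)
    (hr2 : r ≤ m - 1) (s : ℤ →₀ ℤ) :
    ∃ N₀ : ℕ, ∀ N ≥ N₀,
      (∑ k ∈ (Finset.Icc (-(2 * (m : ℤ) * (N : ℤ))) (2 * (m : ℤ) * (N : ℤ))).filter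
          (fun k => k % (m : ℤ) = (r : ℤ)), Xchi k s) =
      2 * ∑ l ∈ Finset.range m, (-1) ^ l *
        ∑ i ∈ s.support.filter (fun i => i % (2 * (m : ℤ)) = (r : ℤ) + (l : ℤ)), s i :=
  stmt_6_general m hodd r hr1 hr2 s
end

section
/- Let m be an even positive integer and let s : ℤ → ℤ be a finitely supported function. Then the sequence N ↦ Σ_{k ∈ ℤ, |k| ≤ N, k ≡ 0 (mod m)} X^k(s) is eventually constant, and its eventual value equals Σ_{k ∈ ℤ} (2k+1)·( Σ_{l=0}^{m-1} (-1)^l s_{mk+l} ), where the outer sum has only finitely many nonzero terms. -/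
/-!
For even `k` the weight `η^k(l)` is `±(-1)^l`, with sign `+` exactly when `k ≤ l`. Among the
multiples `k = m j` with `|k| ≤ N`, i.e. `|j| ≤ M := ⌊N/m⌋`, once `|l| ≤ N` the sign is `+` for the
`⌊l/m⌋ + M + 1` values `j ≤ ⌊l/m⌋` and `-` for the other `M - ⌊l/m⌋`, so `s_l` enters the sum with
the weight `(2⌊l/m⌋ + 1)(-1)^l`, independent of `N`. Writing `l = m k + r` with `0 ≤ r < m`, and
using that `m` is even, this regroups into the right-hand side.
-/

open Finset

lemma eta_of_even {k : ℤ} (hk : Even k) (l : ℤ) :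
    eta k l = (if k ≤ l then 1 else -1) * (l.negOnePow : ℤ) := by
  unfold eta
  split_ifs
  · rw [← Int.coe_negOnePow, Int.cast_id, Int.negOnePow_sub, Int.negOnePow_even k hk, mul_one,
      one_mul]
  · rw [pow_succ, ← Int.coe_negOnePow, Int.cast_id, Int.negOnePow_sub, Int.negOnePow_even k hk,
      one_mul, mul_comm]

lemma sum_Icc_ite_le {M q : ℤ} (h₁ : -M - 1 ≤ q) (h₂ : q ≤ M) :
    ∑ j ∈ Icc (-M) M, (if j ≤ q then 1 else -1 : ℤ) = 2 * q + 1 := by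
  have hle : (Icc (-M) M).filter (· ≤ q) = Icc (-M) q := by ext; simp only [mem_filter, mem_Icc]; omega
  have hgt : (Icc (-M) M).filter (¬ · ≤ q) = Icc (q + 1) M := by ext; simp only [mem_filter, mem_Icc]; omega
  rw [sum_ite, hle, hgt, sum_const, sum_const, Int.card_Icc, Int.card_Icc, smul_neg,
    nsmul_eq_mul, nsmul_eq_mul, mul_one, mul_one]
  omega

lemma filter_dvd_Icc_eq_image {m : ℤ} (hm : 0 < m) (N : ℤ) :
    (Icc (-N) N).filter (m ∣ ·) = (Icc (-(N / m)) (N / m)).image (m * ·) := by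
  ext k
  simp only [mem_filter, mem_Icc, mem_image, neg_le, Int.le_ediv_iff_mul_le hm]
  constructor
  · rintro ⟨⟨h₁, h₂⟩, j, rfl⟩
    exact ⟨j, ⟨by linarith, by linarith⟩, rfl⟩
  · rintro ⟨j, ⟨h₁, h₂⟩, rfl⟩
    exact ⟨⟨by linarith, by linarith⟩, j, rfl⟩

lemma sum_filter_dvd_Icc_eta_s7 {m : ℤ} (hm : 0 < m) (hme : Even m) {N l : ℤ} (hl : |l| ≤ N) :
    ∑ k ∈ (Icc (-N) N).filter (m ∣ ·), eta k l = (2 * (l / m) + 1) * l.negOnePow := by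
  have hmul : ∀ j, m * j ≤ l ↔ j ≤ l / m := fun j => by
    rw [Int.le_ediv_iff_mul_le hm, mul_comm]
  have hlow : -(N / m) - 1 ≤ l / m := by
    rw [Int.le_ediv_iff_mul_le hm]
    linarith [Int.lt_ediv_add_one_mul_self N hm, neg_abs_le l]
  have hup : l / m ≤ N / m := Int.ediv_le_ediv hm ((le_abs_self l).trans hl)
  rw [filter_dvd_Icc_eq_image hm, sum_image (mul_right_injective₀ hm.ne').injOn]
  simp_rw [eta_of_even (hme.mul_right _), hmul, ← sum_mul, sum_Icc_ite_le hlow hup]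

lemma sum_filter_dvd_Icc_Xchi {m : ℤ} (hm : 0 < m) (hme : Even m) (s : ℤ →₀ ℤ) {N : ℤ}
    (hN : ∀ l ∈ s.support, |l| ≤ N) :
    ∑ k ∈ (Icc (-N) N).filter (m ∣ ·), Xchi k s =
      ∑ᶠ l, (2 * (l / m) + 1) * l.negOnePow * s l := by
  unfold Xchi
  rw [sum_finsum_comm _ _ fun k _ => s.hasFiniteSupport.fun_mul_right (eta k)]
  refine finsum_congr fun l => ?_
  by_cases hl : l ∈ s.support
  · rw [← sum_mul, sum_filter_dvd_Icc_eta_s7 hm hme (hN l hl)]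
  · simp [Finsupp.notMem_support_iff.mp hl]

lemma finsum_eq_finsum_sum_range_mul_add {M : Type*} [AddCommMonoid M] (m : ℕ) [NeZero m]
    {g : ℤ → M} (hg : g.HasFiniteSupport) :
    ∑ᶠ l, g l = ∑ᶠ k : ℤ, ∑ r ∈ range m, g (m * k + r) := by
  rw [← finsum_comp_equiv (Int.divModEquiv m).symm,
    finsum_curry _ (hg.fun_comp_of_injective (Int.divModEquiv m).symm.injective)]
  refine finsum_congr fun k => ?_
  rw [finsum_eq_sum_of_fintype, ← Fin.sum_univ_eq_sum_range]
  simp [mul_comm]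

/-- For even `m > 0` and finitely supported `s : ℤ → ℤ`, the
sequence `N ↦ Σ_{|k| ≤ N, k ≡ 0 (mod m)} X^k(s)` is eventually constant with
eventual value `Σ_{k ∈ ℤ} (2k+1)·(Σ_{l=0}^{m-1} (-1)^l s_{mk+l})` (the outer
sum has finitely many nonzero terms). -/
theorem stmt_7 (m : ℕ) (heven : Even m) (hm : 0 < m) (s : ℤ →₀ ℤ) :
    ∃ N₀ : ℕ, ∀ N ≥ N₀,
      (∑ k ∈ (Finset.Icc (-(N : ℤ)) (N : ℤ)).filter (fun k => (m : ℤ) ∣ k), Xchi k s) =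
      ∑ᶠ k : ℤ, (2 * k + 1) *
        ∑ l ∈ Finset.range m, (-1) ^ l * s ((m : ℤ) * k + (l : ℤ)) := by
  have : NeZero m := ⟨hm.ne'⟩
  have hm' : (0 : ℤ) < m := by exact_mod_cast hm
  have hme : Even (m : ℤ) := (Int.even_coe_nat m).mpr heven
  refine ⟨s.support.sup Int.natAbs, fun N hN => ?_⟩
  have hsupp : ∀ l ∈ s.support, |l| ≤ N := fun l hl => by
    rw [Int.abs_eq_natAbs]
    exact_mod_cast (le_sup (f := Int.natAbs) hl).trans hN
  rw [sum_filter_dvd_Icc_Xchi hm' hme s hsupp, finsum_eq_finsum_sum_range_mul_add m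
    (s.hasFiniteSupport.fun_mul_right _)]
  refine finsum_congr fun k => ?_
  rw [mul_sum]
  refine sum_congr rfl fun r hr => ?_
  have hdiv : ((m : ℤ) * k + r) / m = k := by
    rw [add_comm, Int.add_mul_ediv_left _ _ hm'.ne', Int.ediv_eq_zero_of_lt (by positivity)
      (by exact_mod_cast mem_range.mp hr), zero_add]
  have hsign : ((m * k + r : ℤ).negOnePow : ℤ) = (-1) ^ r := by
    rw [Int.negOnePow_add, Int.negOnePow_even _ (hme.mul_right k), one_mul,
      Int.coe_negOnePow_natCast]
  rw [hdiv, hsign, mul_assoc]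
end

section
/- Let Z^{-∞,∞} denote the free ℤ-module of finitely supported functions ℤ → ℤ, and for i ∈ ℤ let e_i denote the indicator function of {i}. Then the set {e_0} ∪ { e_{i-1} + e_i : i ∈ ℤ } is a ℤ-basis of Z^{-∞,∞}. -/
/-!
Let `L = 1 + S` on `ℤ →₀ R`, where `S` shifts the support up by one, so that
`e_{i-1} + e_i = L e_{i-1}`. The map `L` is injective (the top coefficient of `g` reappears in
`L g` one step higher), so the elements `e_{i-1} + e_i` are linearly independent. The alternating
sum `g ↦ ∑ (-1)^j g j` kills the image of `L` and sends `e₀` to `1`, so adding `e₀` keeps the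
family independent. It spans because `e_{j+1} = (e_j + e_{j+1}) - e_j` and
`e_{j-1} = (e_{j-1} + e_j) - e_j`, starting from `e₀`.
-/

open Finsupp Submodule Set

theorem LinearIndependent.option_elim_of_dual {R M ι : Type*} [Ring R] [AddCommGroup M]
    [Module R M] {v : ι → M} {x : M} (hv : LinearIndependent R v) (φ : M →ₗ[R] R)
    (hφv : ∀ i, φ (v i) = 0) (hφx : φ x = 1) :
    LinearIndependent R (fun o : Option ι => o.elim x v) := by
  rw [linearIndependent_iff] at hv ⊢
  intro l hl
  rw [linearCombination_option] at hl
  change l none • x + linearCombination R v l.some = 0 at hl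
  have hφ : φ (linearCombination R v l.some) = 0 := by
    simp [linearCombination_apply, map_finsuppSum, hφv]
  have hnone : l none = 0 := by
    simpa [hφx, hφ] using congr(φ $hl)
  have hsome : l.some = 0 := hv _ (by simpa [hnone] using hl)
  ext (_ | i)
  · exact hnone
  · exact congr($hsome i)

namespace Finsupp

variable (R : Type*) [Ring R]

noncomputable def addShift : (ℤ →₀ R) →ₗ[R] (ℤ →₀ R) :=
  LinearMap.id + lmapDomain R R (· + 1)

noncomputable def altSum : (ℤ →₀ R) →ₗ[R] R :=
  linearCombination R fun j => ((j.negOnePow : ℤ) : R)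

noncomputable def adjacentFamily (o : Option ℤ) : ℤ →₀ R :=
  o.elim (single 0 1) fun i => single (i - 1) 1 + single i 1

variable {R}

theorem addShift_single (j : ℤ) (r : R) :
    addShift R (single j r) = single j r + single (j + 1) r := by
  simp [addShift]

theorem addShift_apply_add_one (g : ℤ →₀ R) (j : ℤ) :
    addShift R g (j + 1) = g (j + 1) + g j := by
  simp only [addShift, LinearMap.add_apply, LinearMap.id_apply, lmapDomain_apply, add_apply]
  rw [mapDomain_apply (add_left_injective 1)]

theorem addShift_injective : Function.Injective (addShift R) := by
  refine (injective_iff_map_eq_zero _).mpr fun g hg => ?_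
  by_contra hne
  have hs : g.support.Nonempty := support_nonempty_iff.mpr hne
  have htop : g (g.support.max' hs) ≠ 0 := mem_support_iff.mp (g.support.max'_mem hs)
  have habove : g (g.support.max' hs + 1) = 0 :=
    notMem_support_iff.mp fun h => (lt_add_one _).not_ge (g.support.le_max' _ h)
  have := congr($hg (g.support.max' hs + 1))
  rw [addShift_apply_add_one, habove, zero_add] at this
  exact htop this

theorem altSum_single (j : ℤ) (r : R) : altSum R (single j r) = r * (j.negOnePow : ℤ) := by
  simp [altSum]

theorem altSum_addShift (g : ℤ →₀ R) : altSum R (addShift R g) = 0 := by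
  induction g using Finsupp.induction_linear with
  | zero => simp
  | add f g hf hg => simp [hf, hg]
  | single j r => simp [addShift_single, altSum_single, Int.negOnePow_succ]

theorem linearIndependent_single_sub_one_add_single :
    LinearIndependent R fun i : ℤ => single (i - 1) (1 : R) + single i 1 := by
  have := ((linearIndependent_single_one R ℤ).comp (· - 1) sub_left_injective).map' _
    (LinearMap.ker_eq_bot.mpr (addShift_injective (R := R)))
  simpa [Function.comp_def, addShift_single] using this

theorem linearIndependent_adjacentFamily : LinearIndependent R (adjacentFamily R) :=
  (linearIndependent_single_sub_one_add_single (R := R)).option_elim_of_dual (altSum R)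
    (fun i => by simpa [addShift_single] using altSum_addShift (single (i - 1) (1 : R)))
    (by simp [altSum_single])

theorem span_adjacentFamily : span R (range (adjacentFamily R)) = ⊤ := by
  rw [eq_top_iff, ← (Finsupp.basisSingleOne (R := R) (ι := ℤ)).span_eq, span_le,
    coe_basisSingleOne]
  rintro _ ⟨j, rfl⟩
  have hmem (o : Option ℤ) : adjacentFamily R o ∈ span R (range (adjacentFamily R)) :=
    subset_span (mem_range_self o)
  induction j using Int.inductionOn' (b := 0) with
  | zero => exact hmem none
  | succ k _ hk => simpa [adjacentFamily] using sub_mem (hmem (Option.some (k + 1))) hk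
  | pred k _ hk => simpa [adjacentFamily] using sub_mem (hmem (Option.some k)) hk

variable (R) in
noncomputable def adjacentBasis : Module.Basis (Option ℤ) R (ℤ →₀ R) :=
  .mk linearIndependent_adjacentFamily span_adjacentFamily.ge

theorem adjacentBasis_apply (o : Option ℤ) : adjacentBasis R o = adjacentFamily R o :=
  Module.Basis.mk_apply _ _ _

end Finsupp

/-- In the free `ℤ`-module `ℤ →₀ ℤ` of finitely supported
functions `ℤ → ℤ`, the family consisting of `e₀` together with the elements
`e_{i-1} + e_i` for `i ∈ ℤ` (where `e_j` is the indicator of `{j}`) is a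
`ℤ`-basis. -/
theorem stmt_10 :
    ∃ b : Module.Basis (Option ℤ) ℤ (ℤ →₀ ℤ),
      b none = Finsupp.single 0 1 ∧
      ∀ i : ℤ, b (some i) = Finsupp.single (i - 1) 1 + Finsupp.single i 1 :=
  ⟨Finsupp.adjacentBasis ℤ, Finsupp.adjacentBasis_apply none,
    fun i => Finsupp.adjacentBasis_apply (some i)⟩
end

section
/- For all integers i and k, X^k(e_{i-1} + e_i) = 2 if i = k, and X^k(e_{i-1} + e_i) = 0 if i ≠ k, where e_j denotes the indicator function of {j} on ℤ. -/
open Function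

lemma hasFiniteSupport_ite_eq {α M : Type*} [DecidableEq α] [Zero M] (j : α) (c : M) :
    (fun l => if l = j then c else 0).HasFiniteSupport :=
  (Set.finite_singleton j).subset fun _ hl => by_contra fun h => hl (if_neg h)

lemma Xchi_add {s t : ℤ → ℤ} (hs : s.HasFiniteSupport) (ht : t.HasFiniteSupport) (k : ℤ) :
    Xchi k (s + t) = Xchi k s + Xchi k t := by
  simp only [Xchi, Pi.add_apply, mul_add]
  exact finsum_add_distrib (hs.mul_right _) (ht.mul_right _)

lemma Xchi_ite_eq (k j : ℤ) : Xchi k (fun l => if l = j then 1 else 0) = eta k j := by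
  simp only [Xchi, mul_ite, mul_one, mul_zero]
  exact (finsum_eq_single _ j fun _ hl => if_neg hl).trans (if_pos rfl)

lemma eta_self (k : ℤ) : eta k k = 1 := by simp [eta]

lemma eta_sub_one_self (k : ℤ) : eta k (k - 1) = 1 := by simp [eta]

lemma eta_sub_one_of_ne {k l : ℤ} (h : l ≠ k) : eta k (l - 1) = -eta k l := by
  rcases lt_or_gt_of_ne h with h | h
  · have : (k - (l - 1)).natAbs = (k - l).natAbs + 1 := by omega
    simp only [eta, if_neg (by omega : ¬k ≤ l - 1), if_neg (by omega : ¬k ≤ l), this, pow_succ]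
    ring
  · have : (l - k).natAbs = (l - 1 - k).natAbs + 1 := by omega
    simp only [eta, if_pos (by omega : k ≤ l - 1), if_pos h.le, this, pow_succ]
    ring

lemma eta_sub_one_add_eta (i k : ℤ) : eta k (i - 1) + eta k i = if i = k then 2 else 0 := by
  split_ifs with h
  · subst h
    rw [eta_sub_one_self, eta_self]
    rfl
  · rw [eta_sub_one_of_ne h, neg_add_cancel]

/-- `X^k(e_{i-1} + e_i) = 2` if `i = k` and `= 0` otherwise,
where `e_j` is the indicator function of `{j}` on `ℤ`. -/
theorem stmt_11 (i k : ℤ) :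
    Xchi k (fun l => (if l = i - 1 then (1 : ℤ) else 0) + (if l = i then 1 else 0)) =
      if i = k then 2 else 0 := by
  rw [← eta_sub_one_add_eta, ← Xchi_ite_eq, ← Xchi_ite_eq,
    ← Xchi_add (hasFiniteSupport_ite_eq _ _) (hasFiniteSupport_ite_eq _ _)]
  rfl
end

section
/- Let F_q be a finite field with q elements. Then the number of ordered pairs (A,B) of 2×2 matrices over F_q such that I + A·B is invertible (equivalently, such that −1 is not an eigenvalue of A·B) equals q^2 − q^3 + 2q^5 − q^6 − q^7 + q^8. -/
/-!
Count the pairs fibrewise over `A`. For invertible `A`, `B ↦ 1 + A * B` is a bijection, so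
there are `|GL₂(F_q)|` good `B`; for `A = 0` every `B` is good. For a nonzero singular `A`,
`det (A * B) = 0`, so `det (1 + A * B) = 1 + tr (A * B)`, and `B ↦ tr (A * B)` is a nonzero
linear functional: exactly `q³` matrices `B` are bad. The total is
`|GL₂|² + q⁴ + (q⁴ - 1 - |GL₂|)(q⁴ - q³)` with `|GL₂| = (q² - 1)(q² - q)`.
-/

open Finset Matrix

theorem Nat.card_units_eq_card_isUnit (M : Type*) [Monoid M] :
    Nat.card Mˣ = Nat.card {x : M // IsUnit x} :=
  Nat.card_congr (Equiv.ofInjective _ Units.val_injective)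

theorem card_isUnit_one_add_mul_of_isUnit {R : Type*} [Ring R] {A : R} (hA : IsUnit A) :
    Nat.card {B : R // IsUnit (1 + A * B)} = Nat.card Rˣ := by
  obtain ⟨U, rfl⟩ := hA
  rw [Nat.card_units_eq_card_isUnit]
  exact Nat.card_congr (((Units.mulLeft U).trans (Equiv.addLeft 1)).subtypeEquiv fun _ => Iff.rfl)

theorem sum_ite_isUnit_ite_eq_zero {M : Type*} [MonoidWithZero M] [Nontrivial M] [Fintype M]
    [DecidablePred (IsUnit : M → Prop)] [DecidableEq M] (u z s : ℤ) :
    ∑ x : M, (if IsUnit x then u else if x = 0 then z else s) =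
      Nat.card Mˣ * u + z + (Fintype.card M - Nat.card Mˣ - 1) * s := by
  have h : ∀ x : M, (if IsUnit x then u else if x = 0 then z else s) =
      s + (if IsUnit x then u - s else 0) + (if x = 0 then z - s else 0) := by
    intro x
    by_cases hx : IsUnit x
    · simp [hx, hx.ne_zero]
    · by_cases h0 : x = 0 <;> simp [hx, h0]
  rw [Nat.card_units_eq_card_isUnit, Nat.card_eq_fintype_card, Fintype.card_subtype]
  simp only [h, sum_add_distrib, sum_const, card_univ, sum_ite_eq', mem_univ, if_true, sum_ite,
    nsmul_eq_mul]
  ring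

theorem Nat.card_subtype_prod_eq_sum {α β : Type*} [Fintype α] [Fintype β] (P : α → β → Prop) :
    Nat.card {p : α × β // P p.1 p.2} = ∑ a, Nat.card {b // P a b} := by
  classical
  simp only [Nat.card_eq_fintype_card]
  rw [Fintype.card_congr (Equiv.subtypeProdEquivSigmaSubtype P), Fintype.card_sigma]

theorem AddMonoidHom.card_fiber_mul_card_of_surjective {G M : Type*} [AddGroup G] [Fintype G]
    [AddMonoid M] [Fintype M] [DecidableEq M] (f : G →+ M) (hf : Function.Surjective f)
    (c : M) : #{g | f g = c} * Fintype.card M = Fintype.card G := by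
  calc #{g | f g = c} * Fintype.card M = ∑ m, #{g | f g = m} := by
        rw [sum_congr rfl fun m _ => AddMonoidHom.card_fiber_eq_of_mem_range f (hf m) (hf c),
          sum_const, card_univ, smul_eq_mul, mul_comm]
    _ = Fintype.card G := (card_eq_sum_card_fiberwise fun g _ => mem_univ (f g)).symm

theorem Matrix.trace_mul_left_surjective {n K : Type*} [Fintype n] [Field K]
    {A : Matrix n n K} (hA : A ≠ 0) : Function.Surjective fun B => trace (A * B) := by
  obtain ⟨X, hX⟩ : ∃ X, trace (A * X) ≠ 0 := by
    by_contra! h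
    exact hA (ext_iff_trace_mul_right.2 fun X => by simp [h X])
  intro c
  refine ⟨(c / trace (A * X)) • X, ?_⟩
  simp only [Matrix.mul_smul, trace_smul, smul_eq_mul, div_mul_cancel₀ _ hX]

theorem Matrix.det_one_add_fin_two {R : Type*} [CommRing R] (M : Matrix (Fin 2) (Fin 2) R) :
    det (1 + M) = 1 + trace M + det M := by
  simp only [det_fin_two, trace_fin_two, add_apply, one_apply_eq, one_apply_ne zero_ne_one,
    one_apply_ne one_ne_zero, zero_add]
  ring

theorem Matrix.card_fin_two (R : Type*) [Fintype R] :
    Fintype.card (Matrix (Fin 2) (Fin 2) R) = Fintype.card R ^ 4 := by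
  change Fintype.card (Fin 2 → Fin 2 → R) = _
  simp only [Fintype.card_fun, Fintype.card_fin, ← pow_mul]

theorem Matrix.isUnit_one_add_fin_two_iff_of_det_eq_zero {K : Type*} [Field K]
    {M : Matrix (Fin 2) (Fin 2) K}
    (hM : M.det = 0) : IsUnit (1 + M) ↔ trace M ≠ -1 := by
  rw [isUnit_iff_isUnit_det, det_one_add_fin_two, hM, add_zero, isUnit_iff_ne_zero, not_iff_not,
    add_eq_zero_iff_eq_neg']

section TwoByTwo

variable {F : Type*} [Field F] [Fintype F]

theorem Matrix.card_GL_fin_two :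
    (Nat.card (GL (Fin 2) F) : ℤ) =
      ((Fintype.card F : ℤ) ^ 2 - 1) * ((Fintype.card F : ℤ) ^ 2 - Fintype.card F) := by
  have hq : 1 ≤ Fintype.card F := Fintype.card_pos
  rw [card_GL_field, Fin.prod_univ_two]
  simp only [Fin.val_zero, Fin.val_one, pow_zero, pow_one]
  push_cast [Nat.cast_sub (Nat.one_le_pow _ _ hq),
    Nat.cast_sub (Nat.le_self_pow two_ne_zero _)]
  simp

theorem Matrix.card_isUnit_one_add_mul_of_det_eq_zero {A : Matrix (Fin 2) (Fin 2) F}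
    (hA₀ : A ≠ 0) (hA : A.det = 0) :
    (Nat.card {B // IsUnit (1 + A * B)} : ℤ) =
      (Fintype.card F : ℤ) ^ 4 - (Fintype.card F : ℤ) ^ 3 := by
  classical
  let f : Matrix (Fin 2) (Fin 2) F →+ F := (traceAddMonoidHom _ F).comp (AddMonoidHom.mulLeft A)
  have hfiber : #{B | f B = -1} = Fintype.card F ^ 3 := by
    have h := f.card_fiber_mul_card_of_surjective (trace_mul_left_surjective hA₀) (-1)
    rw [card_fin_two F, pow_succ] at h
    exact Nat.eq_of_mul_eq_mul_right Fintype.card_pos h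
  have hsplit := card_filter_add_card_filter_not (s := univ) fun B => f B = -1
  rw [card_univ, card_fin_two F, hfiber] at hsplit
  have hunit : ∀ B, IsUnit (1 + A * B) ↔ ¬ f B = -1 := fun B =>
    isUnit_one_add_fin_two_iff_of_det_eq_zero (by rw [det_mul, hA, zero_mul])
  rw [Nat.card_congr (Equiv.subtypeEquivRight hunit), Nat.card_eq_fintype_card,
    Fintype.card_subtype]
  zify at hsplit
  linarith

open Classical in
theorem Matrix.card_isUnit_one_add_mul_fin_two (A : Matrix (Fin 2) (Fin 2) F) :
    (Nat.card {B // IsUnit (1 + A * B)} : ℤ) =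
      if IsUnit A then (Nat.card (GL (Fin 2) F) : ℤ)
      else if A = 0 then (Fintype.card F : ℤ) ^ 4
      else (Fintype.card F : ℤ) ^ 4 - (Fintype.card F : ℤ) ^ 3 := by
  split_ifs with hU h0
  · rw [card_isUnit_one_add_mul_of_isUnit hU]
  · subst h0
    simp [Nat.card_eq_fintype_card, card_fin_two]
  · rw [isUnit_iff_isUnit_det, isUnit_iff_ne_zero, not_not] at hU
    exact card_isUnit_one_add_mul_of_det_eq_zero h0 hU

end TwoByTwo

/-- Over a finite field with `q` elements, the number of
ordered pairs `(A, B)` of `2×2` matrices such that `I + A·B` is invertible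
(equivalently, `-1` is not an eigenvalue of `A·B`) equals
`q² − q³ + 2q⁵ − q⁶ − q⁷ + q⁸`. -/
theorem stmt_12 (F : Type*) [Field F] [Fintype F] :
    (Nat.card {p : Matrix (Fin 2) (Fin 2) F × Matrix (Fin 2) (Fin 2) F //
        IsUnit (1 + p.1 * p.2)} : ℤ) =
      (Fintype.card F : ℤ) ^ 2 - (Fintype.card F : ℤ) ^ 3 + 2 * (Fintype.card F : ℤ) ^ 5
        - (Fintype.card F : ℤ) ^ 6 - (Fintype.card F : ℤ) ^ 7 + (Fintype.card F : ℤ) ^ 8 := by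
  classical
  rw [Nat.card_subtype_prod_eq_sum (fun A B : Matrix (Fin 2) (Fin 2) F => IsUnit (1 + A * B)),
    Nat.cast_sum]
  simp only [card_isUnit_one_add_mul_fin_two]
  rw [sum_ite_isUnit_ite_eq_zero, card_GL_fin_two, card_fin_two]
  push_cast
  ring
end

section
/- Let F_q be a finite field with q elements. Then the number of matrices C ∈ GL₂(F_q) such that −1 is not an eigenvalue of C (equivalently, C + I is invertible) equals (q²−1)(q²−q) − (q+1)(q²−q−1) − 1. -/
/-!
Write `q = |F|`. By inclusion–exclusion, the matrices with `C` and `C + 1` both invertible number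
`q⁴ - 2·#{C singular} + #{C and C + 1 both singular}`, since `C ↦ C + 1` permutes the matrices.
The singular matrices number `q⁴ - |GL₂(F)|`. As `det (C + 1) = det C + tr C + 1`, the matrices
with `C` and `C + 1` both singular are those with `det C = 0` and `tr C = -1`; writing
`C = !![a, b; c, -1 - a]`, for each `a` the equation `b c = -a (1 + a)` has `2q - 1` solutions
when `a ∈ {0, -1}` and `q - 1` otherwise, giving `q² + q` in total.
-/

open Finset

lemma card_filter_prod_eq_sum {α β : Type*} [Fintype α] [Fintype β] (P : α → β → Prop)
    [∀ a b, Decidable (P a b)] :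
    #{p : α × β | P p.1 p.2} = ∑ a, #{b | P a b} := by
  simp only [card_filter, Fintype.sum_prod_type]

lemma card_filter_and_add_card_filter_not_add_card_filter_not {α : Type*} [Fintype α]
    (P Q : α → Prop) [DecidablePred P] [DecidablePred Q] :
    #{a | P a ∧ Q a} + #{a | ¬P a} + #{a | ¬Q a} =
      Fintype.card α + #{a | ¬P a ∧ ¬Q a} := by
  simp only [card_filter, Fintype.card_eq_sum_ones, ← sum_add_distrib]
  refine sum_congr rfl fun a _ => ?_
  by_cases hP : P a <;> by_cases hQ : Q a <;> simp [hP, hQ]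

lemma card_filter_add_right {G : Type*} [AddGroup G] [Fintype G] (P : G → Prop)
    [DecidablePred P] (c : G) : #{x | P (x + c)} = #{x | P x} :=
  card_nbij' (· + c) (· - c) (fun x hx => by simpa using hx) (fun x hx => by simpa using hx)
    (fun x _ => by simp) (fun x _ => by simp)

lemma card_filter_isUnit {M : Type*} [Monoid M] [Fintype M]
    [DecidablePred (IsUnit : M → Prop)] : #{x : M | IsUnit x} = Nat.card Mˣ := by
  rw [← Fintype.card_subtype, ← Nat.card_eq_fintype_card]
  exact (Nat.card_congr Submonoid.unitsTypeEquivIsUnitSubmonoid.toEquiv).symm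

lemma Matrix.det_add_one_fin_two {R : Type*} [CommRing R] (C : Matrix (Fin 2) (Fin 2) R) :
    (C + 1).det = C.det + C.trace + 1 := by
  simp only [Matrix.det_fin_two, Matrix.trace_fin_two, Matrix.add_apply, Matrix.one_apply_eq,
    Matrix.one_apply_ne zero_ne_one, Matrix.one_apply_ne one_ne_zero, add_zero]
  ring

section FiniteField

variable {F : Type*} [Field F] [Fintype F] [DecidableEq F]

lemma card_filter_mul_eq (t : F) :
    #{p : F × F | p.1 * p.2 = t} = Fintype.card F - 1 + if t = 0 then Fintype.card F else 0 := by
  have hfiber : ∀ x : F, x ≠ 0 → #{y | x * y = t} = 1 := fun x hx => by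
    simp_rw [← eq_inv_mul_iff_mul_eq₀ hx, filter_eq', mem_univ, if_true, card_singleton]
  rw [card_filter_prod_eq_sum (fun x y : F => x * y = t), ← add_sum_erase _ _ (mem_univ 0),
    sum_congr rfl fun x hx => hfiber x (ne_of_mem_erase hx)]
  split_ifs with ht <;> simp [ht, Ne.symm, add_comm, card_erase_of_mem]

lemma card_filter_mul_sub_eq_zero {s : F} (hs : s ≠ 0) : #{a : F | a * (s - a) = 0} = 2 := by
  rw [show ({a | a * (s - a) = 0} : Finset F) = {0, s} by ext; simp [sub_eq_zero, eq_comm],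
    card_pair hs.symm]

lemma card_filter_det_eq_zero_trace_eq {s : F} (hs : s ≠ 0) :
    #{C : Matrix (Fin 2) (Fin 2) F | C.det = 0 ∧ C.trace = s} =
      Fintype.card F ^ 2 + Fintype.card F := by
  have hparam : #{C : Matrix (Fin 2) (Fin 2) F | C.det = 0 ∧ C.trace = s}
      = #{x : F × (F × F) | x.2.1 * x.2.2 = x.1 * (s - x.1)} := by
    refine card_nbij' (fun C => (C 0 0, C 0 1, C 1 0)) (fun x => !![x.1, x.2.1; x.2.2, s - x.1])
      (fun C hC => ?_) (fun x hx => ?_) (fun C hC => ?_) (fun x _ => by simp)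
    · simp only [mem_coe, mem_filter_univ, Matrix.det_fin_two, Matrix.trace_fin_two] at hC ⊢
      rw [← hC.2]
      linear_combination -hC.1
    · simp only [mem_coe, mem_filter_univ, Matrix.det_fin_two_of,
        Matrix.trace_fin_two_of] at hx ⊢
      exact ⟨by linear_combination -hx, by ring⟩
    · simp only [mem_coe, mem_filter_univ, Matrix.trace_fin_two] at hC
      ext i j
      fin_cases i <;> fin_cases j <;> simp [← hC.2]
  rw [hparam, card_filter_prod_eq_sum (fun a (p : F × F) => p.1 * p.2 = a * (s - a))]
  simp only [card_filter_mul_eq, sum_add_distrib, sum_const, card_univ, smul_eq_mul, sum_ite,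
    card_filter_mul_sub_eq_zero hs]
  have hq : 1 ≤ Fintype.card F := Fintype.card_pos
  zify [hq]
  ring

lemma card_filter_not_isUnit_and_not_isUnit_add_one :
    #{C : Matrix (Fin 2) (Fin 2) F | ¬IsUnit C ∧ ¬IsUnit (C + 1)} =
      Fintype.card F ^ 2 + Fintype.card F := by
  rw [← card_filter_det_eq_zero_trace_eq (neg_ne_zero.2 (one_ne_zero' F))]
  congr 1
  ext C
  simp only [mem_filter_univ, Matrix.isUnit_iff_isUnit_det, isUnit_iff_ne_zero, not_not,
    Matrix.det_add_one_fin_two]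
  constructor
  · rintro ⟨h0, h1⟩
    exact ⟨h0, by linear_combination h1 - h0⟩
  · rintro ⟨h0, h1⟩
    exact ⟨h0, by linear_combination h0 + h1⟩

end FiniteField

/-- Over a finite field with `q` elements, the number of
invertible `2×2` matrices `C` such that `-1` is not an eigenvalue of `C`
(equivalently, `C + I` is invertible) equals
`(q²−1)(q²−q) − (q+1)(q²−q−1) − 1`. -/
theorem stmt_13 (F : Type*) [Field F] [Fintype F] :
    (Nat.card {C : Matrix (Fin 2) (Fin 2) F // IsUnit C ∧ IsUnit (C + 1)} : ℤ) =
      ((Fintype.card F : ℤ) ^ 2 - 1) * ((Fintype.card F : ℤ) ^ 2 - (Fintype.card F : ℤ))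
        - ((Fintype.card F : ℤ) + 1) * ((Fintype.card F : ℤ) ^ 2 - (Fintype.card F : ℤ) - 1)
        - 1 := by
  classical
  set q := Fintype.card F
  have hq : 1 ≤ q := Fintype.card_pos
  have hsize : Fintype.card (Matrix (Fin 2) (Fin 2) F) = q ^ 4 := by
    rw [← Nat.card_eq_fintype_card]
    simp [Matrix, q, ← pow_mul]
  have hGL : Nat.card (GL (Fin 2) F) = (q ^ 2 - 1) * (q ^ 2 - q) := by
    rw [Matrix.card_GL_field, Fin.prod_univ_two]
    simp [q]
  have hsingular := card_filter_add_card_filter_not (s := univ)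
    (fun C : Matrix (Fin 2) (Fin 2) F => IsUnit C)
  rw [card_filter_isUnit, hGL, card_univ, hsize] at hsingular
  have hshift : #{C : Matrix (Fin 2) (Fin 2) F | ¬IsUnit (C + 1)} = #{C | ¬IsUnit C} :=
    card_filter_add_right (fun C => ¬IsUnit C) 1
  have hcount := card_filter_and_add_card_filter_not_add_card_filter_not
    (fun C : Matrix (Fin 2) (Fin 2) F => IsUnit C) (fun C => IsUnit (C + 1))
  beta_reduce at hcount
  rw [hshift, card_filter_not_isUnit_and_not_isUnit_add_one, hsize] at hcount
  rw [Nat.card_eq_fintype_card, Fintype.card_subtype]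
  zify [Nat.one_le_pow 2 _ hq, Nat.le_self_pow two_ne_zero q] at hcount hsingular
  linear_combination hcount - 2 * hsingular
end

section
/- Let F_q be a finite field with q elements. Then the number of 2×2 matrices C over F_q of rank 1 such that −1 is not an eigenvalue of C (equivalently, C + I is invertible) equals (q²−q−1)(q+1). -/
/-!
A `2 × 2` matrix `C` has rank one iff `C ≠ 0` and `det C = 0`, and then
`det (C + 1) = det C + tr C + 1 = tr C + 1`. So we count the nonzero `!![a, b; c, d]` with
`a * d = b * c` and `a + d ≠ -1`. For a fixed diagonal `(a, d)` the equation `b * c = a * d` has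
`q - 1` solutions if `a * d ≠ 0` and `2 * q - 1` if `a * d = 0`. Of the `q ^ 2 - q` diagonals with
`a + d ≠ -1`, exactly `2 * q - 3` have `a * d = 0`, the two missing ones being `(0, -1)` and
`(-1, 0)`. This gives `(q - 1) * (q ^ 2 - q) + q * (2 * q - 3) = q ^ 3 - 2 * q` matrices, one of
which is `0`.
-/

open Finset

namespace Matrix

section Rank

variable {m n K : Type*} [Fintype n] [Field K]

theorem rank_eq_zero_iff (A : Matrix m n K) : A.rank = 0 ↔ A = 0 := by
  classical
  rw [rank, Submodule.finrank_eq_zero, LinearMap.range_eq_bot, ← toLin'_apply',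
    LinearEquiv.map_eq_zero_iff]

theorem rank_eq_card_iff_det_ne_zero [DecidableEq n] (A : Matrix n n K) :
    A.rank = Fintype.card n ↔ A.det ≠ 0 := by
  refine ⟨fun h => ?_, rank_of_det_ne_zero⟩
  have hrange : LinearMap.range A.mulVecLin = ⊤ :=
    Submodule.eq_top_of_finrank_eq (by simpa [rank] using h)
  rw [← isUnit_iff_ne_zero, ← isUnit_iff_isUnit_det, ← mulVec_surjective_iff_isUnit]
  exact LinearMap.range_eq_top.mp hrange

theorem rank_eq_one_iff_fin_two (C : Matrix (Fin 2) (Fin 2) K) :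
    C.rank = 1 ↔ C ≠ 0 ∧ C.det = 0 := by
  have hle : C.rank ≤ 2 := by simpa using C.rank_le_card_width
  rw [Ne, ← rank_eq_zero_iff, ← not_ne_iff (a := C.det), ← rank_eq_card_iff_det_ne_zero,
    Fintype.card_fin]
  omega

end Rank

variable {R : Type*} [CommRing R]

theorem det_add_one_fin_two_s14 (C : Matrix (Fin 2) (Fin 2) R) :
    (C + 1).det = C.det + C.trace + 1 := by
  simp [det_fin_two, trace_fin_two]
  ring

theorem rank_eq_one_and_isUnit_add_one_iff {K : Type*} [Field K] (C : Matrix (Fin 2) (Fin 2) K) :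
    C.rank = 1 ∧ IsUnit (C + 1) ↔ C ≠ 0 ∧ C.det = 0 ∧ C.trace ≠ -1 := by
  rw [rank_eq_one_iff_fin_two, isUnit_iff_isUnit_det, isUnit_iff_ne_zero, det_add_one_fin_two_s14,
    and_assoc]
  refine and_congr_right fun _ => and_congr_right fun hdet => ?_
  rw [hdet, zero_add, Ne, Ne, add_eq_zero_iff_eq_neg]

@[simps apply]
def finTwoEquivDiagOffDiag : Matrix (Fin 2) (Fin 2) R ≃ (R × R) × (R × R) where
  toFun C := ((C 0 0, C 1 1), (C 0 1, C 1 0))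
  invFun x := !![x.1.1, x.2.1; x.2.2, x.1.2]
  left_inv C := by ext i j; fin_cases i <;> fin_cases j <;> rfl
  right_inv _ := rfl

end Matrix

namespace FiniteField

variable {F : Type*} [Field F] [Fintype F] [DecidableEq F]

local notation "q" => (Fintype.card F : ℤ)

theorem card_nonzero : (#{a : F | a ≠ 0} : ℤ) = q - 1 := by
  rw [filter_ne', card_erase_of_mem (mem_univ _), card_univ, Nat.cast_sub Fintype.card_pos,
    Nat.cast_one]

theorem card_mul_eq_of_ne_zero {s : F} (hs : s ≠ 0) :
    (#{p : F × F | p.1 * p.2 = s} : ℤ) = q - 1 := by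
  rw [← card_nonzero]
  congr 1
  refine card_nbij' Prod.fst (fun a => (a, s / a)) ?_ ?_ ?_ ?_
  · intro p hp
    simp only [coe_filter, mem_univ, true_and, Set.mem_ofPred_eq] at hp ⊢
    exact left_ne_zero_of_mul (hp ▸ hs)
  · intro a ha
    simp only [coe_filter, mem_univ, true_and, Set.mem_ofPred_eq] at ha ⊢
    exact mul_div_cancel₀ s ha
  · intro p hp
    simp only [coe_filter, mem_univ, true_and, Set.mem_ofPred_eq] at hp
    have : p.1 ≠ 0 := left_ne_zero_of_mul (hp ▸ hs)
    ext
    · rfl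
    · simp [← hp, this]
  · intro a _
    rfl

theorem card_mul_eq_zero : (#{p : F × F | p.1 * p.2 = 0} : ℤ) = 2 * q - 1 := by
  have hne : #{p : F × F | p.1 * p.2 ≠ 0} = #{a : F | a ≠ 0} * #{a : F | a ≠ 0} := by
    rw [← card_product, ← filter_product, univ_product_univ]
    simp only [mul_ne_zero_iff]
  have hsplit := card_filter_add_card_filter_not (s := univ) (fun p : F × F => p.1 * p.2 = 0)
  rw [hne, card_univ, Fintype.card_prod] at hsplit
  zify at hsplit
  rw [card_nonzero] at hsplit
  linear_combination hsplit

theorem card_mul_eq (s : F) :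
    (#{p : F × F | p.1 * p.2 = s} : ℤ) = q - 1 + if s = 0 then q else 0 := by
  split_ifs with hs
  · rw [hs, card_mul_eq_zero]; ring
  · rw [card_mul_eq_of_ne_zero hs, add_zero]

theorem card_add_eq (c : F) : #{p : F × F | p.1 + p.2 = c} = Fintype.card F := by
  rw [← card_univ]
  refine card_nbij' Prod.fst (fun a => (a, c - a)) (fun _ _ => mem_coe.2 (mem_univ _)) ?_ ?_ ?_
  · intro a _
    simp
  · intro p hp
    simp only [coe_filter, mem_univ, true_and, Set.mem_ofPred_eq] at hp
    ext
    · rfl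
    · simp [← hp]
  · intro a _
    rfl

theorem card_add_ne (c : F) : (#{p : F × F | p.1 + p.2 ≠ c} : ℤ) = q ^ 2 - q := by
  have hsplit := card_filter_add_card_filter_not (s := univ) (fun p : F × F => p.1 + p.2 = c)
  rw [card_add_eq, card_univ, Fintype.card_prod] at hsplit
  zify at hsplit
  linear_combination hsplit

theorem card_add_ne_neg_one_and_mul_eq_zero :
    (#{p : F × F | p.1 + p.2 ≠ -1 ∧ p.1 * p.2 = 0} : ℤ) = 2 * q - 3 := by
  have hpair : ({p : F × F | p.1 * p.2 = 0 ∧ p.1 + p.2 = -1} : Finset (F × F))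
      = {(0, -1), (-1, 0)} := by
    ext ⟨a, d⟩
    simp only [mem_filter, mem_univ, true_and, mem_insert, mem_singleton, Prod.mk.injEq,
      mul_eq_zero]
    constructor
    · rintro ⟨rfl | rfl, h⟩ <;> simp_all
    · rintro (⟨rfl, rfl⟩ | ⟨rfl, rfl⟩) <;> simp
  have hsplit := card_filter_add_card_filter_not (s := {p : F × F | p.1 * p.2 = 0})
    (fun p : F × F => p.1 + p.2 = -1)
  rw [filter_filter, filter_filter, hpair, card_pair (by simp)] at hsplit
  zify at hsplit
  rw [card_mul_eq_zero] at hsplit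
  simp_rw [and_comm (b := _ * _ = _)]
  linear_combination hsplit

theorem card_fst_mem_and_mul_eq_mul (A : Finset (F × F)) :
    (#{z : (F × F) × (F × F) | z.1 ∈ A ∧ z.1.1 * z.1.2 = z.2.1 * z.2.2} : ℤ)
      = (q - 1) * #A + q * #{x ∈ A | x.1 * x.2 = 0} := by
  have hfiber : (#{z : (F × F) × (F × F) | z.1 ∈ A ∧ z.1.1 * z.1.2 = z.2.1 * z.2.2} : ℤ)
      = ∑ x ∈ A, (#{y : F × F | y.1 * y.2 = x.1 * x.2} : ℤ) := by
    rw [card_filter, Fintype.sum_prod_type]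
    conv_rhs => rw [← univ_inter A, ← sum_ite_mem]
    push_cast
    refine sum_congr rfl fun x _ => ?_
    split_ifs with hx
    · rw [card_filter]
      push_cast
      simp [hx, eq_comm]
    · simp [hx]
  rw [hfiber]
  simp_rw [card_mul_eq]
  rw [sum_add_distrib, sum_const, ← sum_filter, sum_const]
  simp [mul_comm]

theorem card_det_eq_zero_trace_ne_neg_one :
    (#{C : Matrix (Fin 2) (Fin 2) F | C.det = 0 ∧ C.trace ≠ -1} : ℤ) = q ^ 3 - 2 * q := by
  rw [card_equiv Matrix.finTwoEquivDiagOffDiag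
      (t := {z | z.1 ∈ ({x | x.1 + x.2 ≠ -1} : Finset (F × F)) ∧ z.1.1 * z.1.2 = z.2.1 * z.2.2}),
    card_fst_mem_and_mul_eq_mul, filter_filter, card_add_ne, card_add_ne_neg_one_and_mul_eq_zero]
  · ring
  · intro C
    simp [Matrix.det_fin_two, Matrix.trace_fin_two, sub_eq_zero, and_comm]

end FiniteField

/-- Over a finite field with `q` elements, the number of
`2×2` matrices `C` of rank `1` such that `-1` is not an eigenvalue of `C`
(equivalently, `C + I` is invertible) equals `(q²−q−1)(q+1)`. -/
theorem stmt_14 (F : Type*) [Field F] [Fintype F] :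
    (Nat.card {C : Matrix (Fin 2) (Fin 2) F // C.rank = 1 ∧ IsUnit (C + 1)} : ℤ) =
      ((Fintype.card F : ℤ) ^ 2 - (Fintype.card F : ℤ) - 1) * ((Fintype.card F : ℤ) + 1) := by
  classical
  rw [Nat.card_eq_fintype_card, Fintype.card_subtype]
  simp_rw [Matrix.rank_eq_one_and_isUnit_add_one_iff]
  have herase : ({C | C ≠ 0 ∧ C.det = 0 ∧ C.trace ≠ -1} : Finset (Matrix (Fin 2) (Fin 2) F))
      = ({C | C.det = 0 ∧ C.trace ≠ -1} : Finset _).erase 0 := by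
    ext C
    simp
  have hzero : (0 : Matrix (Fin 2) (Fin 2) F) ∈ ({C | C.det = 0 ∧ C.trace ≠ -1} : Finset _) := by
    simp
  have hcard := card_erase_add_one hzero
  zify at hcard
  rw [FiniteField.card_det_eq_zero_trace_ne_neg_one] at hcard
  rw [herase]
  linear_combination hcard
end
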